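/- arXiv:2601.08041 — 5 statements merged into one kernel-verified Lean document; each statement's English description precedes it below -/
import Mathlib

section
/- Let x ∈ ℝ^d be a random vector with mean-zero coordinates having finite fourth moments, covariance E[x_q x_r] = σ_{qr} for a symmetric positive semidefinite matrix Σ with operator norm ‖Σ‖ ≤ C, and fourth-cumulant sums κ₄ := sup_{q,r} Σ_{s,t=1}^{d} |κ(x_q, x_r, x_s, x_t)| < ∞. Then for every deterministic matrix B ∈ ℝ^{d×d}, E[ |xᵀ B x − Tr(BΣ)|² ] ≤ (2C² + κ₄) ‖B‖² d, where ‖B‖ is the operator norm of B. -/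
/-!
Write `Y = xᵀBx = ∑_{(q,r)} B_{qr} x_q x_r`. Its mean is `Tr(BΣ)`, so the left-hand side is
`Var Y = ∑_{p,p'} B_p B_{p'} Cov(x_q x_r, x_s x_t)`, and each covariance splits as
`κ(x_q, x_r, x_s, x_t) + σ_{qs} σ_{rt} + σ_{qt} σ_{rs}`.
The cumulant part is at most `κ₄ ‖B‖_F²` by Schur's test: `B_p B_{p'} ≤ (B_p² + B_{p'}²) / 2`
and the kernel `κ(p, p')` is symmetric under exchanging the pairs `p` and `p'`.
The two Gaussian parts are `Tr(BΣBᵀΣ)` and `Tr(BΣBΣ)`. Factoring `Σ = AᵀA` and putting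
`M = ABAᵀ`, they are `Tr(MMᵀ)` and `Tr(MM) ≤ Tr(MMᵀ)`, and two applications of
`Tr(QΣQᵀ) ≤ ‖Σ‖ Tr(QQᵀ)` give `Tr(MMᵀ) ≤ ‖Σ‖² ‖B‖_F²`.
Finally `‖B‖_F²`, the sum of the squared column norms, is at most `d ‖B‖²`.
-/

open MeasureTheory Matrix

noncomputable def opNorm {I : Type*} [Fintype I] [DecidableEq I] (A : Matrix I I ℝ) : ℝ :=
  ‖LinearMap.toContinuousLinearMap (Matrix.toEuclideanLin A)‖

open ProbabilityTheory

section Matrices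

variable {n : Type*} [Fintype n]

lemma trace_mul_self_le_trace_mul_transpose (M : Matrix n n ℝ) :
    trace (M * M) ≤ trace (M * Mᵀ) := by
  have h := (posSemidef_self_mul_conjTranspose (M - Mᵀ)).trace_nonneg
  rw [conjTranspose_eq_transpose_of_trivial, transpose_sub, transpose_transpose] at h
  have hMM : trace (Mᵀ * Mᵀ) = trace (M * M) := trace_transpose_mul M M
  have hMMt : trace (Mᵀ * M) = trace (M * Mᵀ) := trace_mul_comm _ _
  simp only [sub_mul, mul_sub, trace_sub] at h
  linarith

lemma sum_pairs_mul_mul_eq_trace_mul_transpose (B S : Matrix n n ℝ) :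
    ∑ p : n × n, ∑ p' : n × n, B p.1 p.2 * B p'.1 p'.2 * (S p.1 p'.1 * S p.2 p'.2)
      = trace (B * S * Bᵀ * Sᵀ) := by
  simp only [trace, diag, mul_apply, transpose_apply, Fintype.sum_prod_type, Finset.sum_mul]
  refine Finset.sum_congr rfl fun a _ => ?_
  rw [Finset.sum_comm]
  refine Finset.sum_congr rfl fun e _ => ?_
  rw [Finset.sum_comm]
  exact Finset.sum_congr rfl fun c _ => Finset.sum_congr rfl fun b _ => by ring

lemma sum_pairs_mul_mul_eq_trace_mul (B S : Matrix n n ℝ) :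
    ∑ p : n × n, ∑ p' : n × n, B p.1 p.2 * B p'.1 p'.2 * (S p.1 p'.2 * S p.2 p'.1)
      = trace (B * S * B * Sᵀ) := by
  simp only [trace, diag, mul_apply, transpose_apply, Fintype.sum_prod_type, Finset.sum_mul]
  refine Finset.sum_congr rfl fun a _ => ?_
  rw [Finset.sum_comm, Finset.sum_congr rfl fun c _ => Finset.sum_comm, Finset.sum_comm]
  exact Finset.sum_congr rfl fun e _ => Finset.sum_congr rfl fun c _ =>
    Finset.sum_congr rfl fun b _ => by ring

variable [DecidableEq n]

open scoped MatrixOrder in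
lemma Matrix.PosSemidef.exists_eq_transpose_mul_self {S : Matrix n n ℝ} (hS : S.PosSemidef) :
    ∃ A : Matrix n n ℝ, S = Aᵀ * A := by
  obtain ⟨A, rfl⟩ := CStarAlgebra.nonneg_iff_eq_star_mul_self.mp hS.nonneg
  exact ⟨A, by rw [star_eq_conjTranspose, conjTranspose_eq_transpose_of_trivial]⟩

lemma opNorm_nonneg (A : Matrix n n ℝ) : 0 ≤ opNorm A := norm_nonneg _

lemma norm_toEuclideanLin_le (A : Matrix n n ℝ) (v : EuclideanSpace ℝ n) :
    ‖toEuclideanLin A v‖ ≤ opNorm A * ‖v‖ :=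
  (LinearMap.toContinuousLinearMap (toEuclideanLin A)).le_opNorm v

lemma dotProduct_mulVec_le_opNorm_mul (A : Matrix n n ℝ) (v : n → ℝ) :
    v ⬝ᵥ (A *ᵥ v) ≤ opNorm A * (v ⬝ᵥ v) := by
  set w : EuclideanSpace ℝ n := WithLp.toLp 2 v
  have hinner : v ⬝ᵥ (A *ᵥ v) = inner ℝ w (toEuclideanLin A w) := by
    simp [w, EuclideanSpace.inner_eq_star_dotProduct, dotProduct_comm]
  have hnorm : v ⬝ᵥ v = ‖w‖ ^ 2 := by
    rw [EuclideanSpace.real_norm_sq_eq]; simp [w, dotProduct, sq]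
  calc v ⬝ᵥ (A *ᵥ v) ≤ ‖w‖ * ‖toEuclideanLin A w‖ := hinner ▸ real_inner_le_norm _ _
    _ ≤ ‖w‖ * (opNorm A * ‖w‖) := by gcongr; exact norm_toEuclideanLin_le A w
    _ = opNorm A * (v ⬝ᵥ v) := by rw [hnorm]; ring

lemma trace_transpose_mul_self_le (B : Matrix n n ℝ) :
    trace (Bᵀ * B) ≤ opNorm B ^ 2 * Fintype.card n := by
  have hcol (j : n) : (Bᵀ * B) j j = ‖toEuclideanLin B (EuclideanSpace.single j 1)‖ ^ 2 := by
    rw [EuclideanSpace.real_norm_sq_eq]; simp [mul_apply, sq]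
  calc trace (Bᵀ * B) = ∑ j, ‖toEuclideanLin B (EuclideanSpace.single j 1)‖ ^ 2 :=
        Finset.sum_congr rfl fun j _ => hcol j
    _ ≤ ∑ _j : n, opNorm B ^ 2 := by
        gcongr with j
        simpa using norm_toEuclideanLin_le B (EuclideanSpace.single j 1)
    _ = opNorm B ^ 2 * Fintype.card n := by simp [mul_comm]

lemma trace_mul_mul_transpose_le {C : ℝ} {S : Matrix n n ℝ} (hC : opNorm S ≤ C)
    (Q : Matrix n n ℝ) : trace (Q * S * Qᵀ) ≤ C * trace (Q * Qᵀ) := by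
  have hC0 : 0 ≤ C := (opNorm_nonneg S).trans hC
  simp only [trace, diag, Finset.mul_sum]
  gcongr with i
  calc (Q * S * Qᵀ) i i = Q i ⬝ᵥ S *ᵥ Q i := by rw [mul_mul_apply, transpose_transpose]
    _ ≤ opNorm S * (Q i ⬝ᵥ Q i) := dotProduct_mulVec_le_opNorm_mul S (Q i)
    _ ≤ C * (Q i ⬝ᵥ Q i) := by gcongr; exact dotProduct_self_star_nonneg _
    _ = C * (Q * Qᵀ) i i := by rw [mul_apply']; rfl

lemma trace_mul_mul_transpose_mul_le {C : ℝ} {S : Matrix n n ℝ} (hS : S.PosSemidef)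
    (hC : opNorm S ≤ C) (B : Matrix n n ℝ) :
    trace (B * S * Bᵀ * S) ≤ C ^ 2 * trace (Bᵀ * B) := by
  have hC0 : 0 ≤ C := (opNorm_nonneg S).trans hC
  obtain ⟨A, rfl⟩ := hS.exists_eq_transpose_mul_self
  calc trace (B * (Aᵀ * A) * Bᵀ * (Aᵀ * A)) = trace ((A * B) * (Aᵀ * A) * (A * B)ᵀ) := by
        simp only [transpose_mul, Matrix.mul_assoc]; rw [trace_mul_comm A]
        simp only [Matrix.mul_assoc]
    _ ≤ C * trace ((A * B) * (A * B)ᵀ) := trace_mul_mul_transpose_le hC _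
    _ = C * trace (Bᵀ * (Aᵀ * A) * Bᵀᵀ) := by
        rw [transpose_mul, transpose_transpose, trace_mul_cycle]; simp only [Matrix.mul_assoc]
    _ ≤ C * (C * trace (Bᵀ * Bᵀᵀ)) := by gcongr; exact trace_mul_mul_transpose_le hC _
    _ = C ^ 2 * trace (Bᵀ * B) := by rw [transpose_transpose]; ring

lemma trace_mul_mul_mul_le {C : ℝ} {S : Matrix n n ℝ} (hS : S.PosSemidef)
    (hC : opNorm S ≤ C) (B : Matrix n n ℝ) :
    trace (B * S * B * S) ≤ C ^ 2 * trace (Bᵀ * B) := by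
  obtain ⟨A, rfl⟩ := hS.exists_eq_transpose_mul_self
  set M := A * B * Aᵀ
  calc trace (B * (Aᵀ * A) * B * (Aᵀ * A)) = trace (M * M) := by
        simp only [M, Matrix.mul_assoc]; rw [trace_mul_comm A]; simp only [Matrix.mul_assoc]
    _ ≤ trace (M * Mᵀ) := trace_mul_self_le_trace_mul_transpose M
    _ = trace (B * (Aᵀ * A) * Bᵀ * (Aᵀ * A)) := by
        simp only [M, transpose_mul, transpose_transpose, Matrix.mul_assoc]
        rw [trace_mul_comm A]; simp only [Matrix.mul_assoc]
    _ ≤ C ^ 2 * trace (Bᵀ * B) := trace_mul_mul_transpose_mul_le hS hC B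

end Matrices

lemma sum_sum_mul_mul_le_of_symm {α : Type*} [Fintype α] {K : α → α → ℝ} {κ : ℝ}
    (hsymm : ∀ i j, K j i = K i j) (hrow : ∀ i, ∑ j, |K i j| ≤ κ) (f : α → ℝ) :
    ∑ i, ∑ j, f i * f j * K i j ≤ κ * ∑ i, f i ^ 2 := by
  have hamgm (i j : α) : f i * f j * K i j ≤ (f i ^ 2 + f j ^ 2) / 2 * |K i j| := by
    calc f i * f j * K i j ≤ |f i * f j| * |K i j| := by rw [← abs_mul]; exact le_abs_self _
      _ ≤ (f i ^ 2 + f j ^ 2) / 2 * |K i j| := by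
          gcongr
          rw [abs_mul, ← sq_abs (f i), ← sq_abs (f j)]
          nlinarith [sq_nonneg (|f i| - |f j|)]
  have hswap : ∑ i, ∑ j, f j ^ 2 * |K i j| = ∑ i, ∑ j, f i ^ 2 * |K i j| := by
    rw [Finset.sum_comm]; simp only [hsymm]
  calc ∑ i, ∑ j, f i * f j * K i j ≤ ∑ i, ∑ j, (f i ^ 2 + f j ^ 2) / 2 * |K i j| :=
        Finset.sum_le_sum fun i _ => Finset.sum_le_sum fun j _ => hamgm i j
    _ = ∑ i, ∑ j, f i ^ 2 * |K i j| := by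
        simp only [add_div, add_mul, Finset.sum_add_distrib, div_mul_eq_mul_div, ← Finset.sum_div,
          hswap]
        ring
    _ ≤ ∑ i, f i ^ 2 * κ := by
        simp only [← Finset.mul_sum]; gcongr with i; exact hrow i
    _ = κ * ∑ i, f i ^ 2 := by rw [← Finset.sum_mul, mul_comm]

section Cumulants

variable {Ω : Type*} [MeasurableSpace Ω] {μ : Measure Ω}

instance ENNReal.instHolderTripleFourFourTwo : ENNReal.HolderTriple 4 4 2 := ⟨by
  rw [← two_mul, show (4 : ENNReal) = 2 * 2 by norm_num, ENNReal.mul_inv (by simp) (by simp),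
    ← mul_assoc, ENNReal.mul_inv_cancel (by simp) (by simp), one_mul]⟩

noncomputable def cumulant4 (μ : Measure Ω) (a b c e : Ω → ℝ) : ℝ :=
  (∫ ω, a ω * b ω * c ω * e ω ∂μ) - (∫ ω, a ω * b ω ∂μ) * (∫ ω, c ω * e ω ∂μ)
    - (∫ ω, a ω * c ω ∂μ) * (∫ ω, b ω * e ω ∂μ) - (∫ ω, a ω * e ω ∂μ) * (∫ ω, b ω * c ω ∂μ)

lemma cumulant4_swap_pairs (a b c e : Ω → ℝ) : cumulant4 μ c e a b = cumulant4 μ a b c e := by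
  have hcomm (f g : Ω → ℝ) : ∫ ω, f ω * g ω ∂μ = ∫ ω, g ω * f ω ∂μ := by simp_rw [mul_comm]
  have h4 : ∫ ω, c ω * e ω * a ω * b ω ∂μ = ∫ ω, a ω * b ω * c ω * e ω ∂μ := by
    congr 1 with ω; ring
  rw [cumulant4, cumulant4, h4, hcomm c a, hcomm e b, hcomm c b, hcomm e a]
  ring

lemma covariance_mul_mul [IsProbabilityMeasure μ] {a b c e : Ω → ℝ} (ha : MemLp a 4 μ)
    (hb : MemLp b 4 μ) (hc : MemLp c 4 μ) (he : MemLp e 4 μ) :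
    cov[fun ω => a ω * b ω, fun ω => c ω * e ω; μ]
      = cumulant4 μ a b c e + (∫ ω, a ω * c ω ∂μ) * (∫ ω, b ω * e ω ∂μ)
        + (∫ ω, a ω * e ω ∂μ) * (∫ ω, b ω * c ω ∂μ) := by
  rw [covariance_eq_sub (hb.mul' ha) (he.mul' hc), cumulant4]
  have h4 : ∫ ω, a ω * b ω * (c ω * e ω) ∂μ = ∫ ω, a ω * b ω * c ω * e ω ∂μ := by
    simp_rw [mul_assoc]
  simp only [Pi.mul_apply, h4]
  ring

variable {n : Type*} [Fintype n] {x : Ω → n → ℝ}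

lemma sum_pairs_mul_mul_cumulant4_le {κ : ℝ}
    (hκ : ∀ q r, ∑ s, ∑ t, |cumulant4 μ (x · q) (x · r) (x · s) (x · t)| ≤ κ)
    (B : Matrix n n ℝ) :
    ∑ p : n × n, ∑ p' : n × n,
        B p.1 p.2 * B p'.1 p'.2 * cumulant4 μ (x · p.1) (x · p.2) (x · p'.1) (x · p'.2)
      ≤ κ * trace (Bᵀ * B) := by
  have hFrobenius : ∑ p : n × n, B p.1 p.2 ^ 2 = trace (Bᵀ * B) := by
    rw [Fintype.sum_prod_type, trace_mul_comm]; simp [trace, mul_apply, sq]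
  rw [← hFrobenius]
  refine sum_sum_mul_mul_le_of_symm (fun p p' => cumulant4_swap_pairs _ _ _ _)
    (fun p => ?_) (fun p : n × n => B p.1 p.2)
  rw [Fintype.sum_prod_type]
  exact hκ p.1 p.2

lemma quadForm_eq_sum_pairs (B : Matrix n n ℝ) (v : n → ℝ) :
    ∑ q, ∑ r, v q * B q r * v r = ∑ p : n × n, B p.1 p.2 * (v p.1 * v p.2) := by
  rw [Fintype.sum_prod_type]
  exact Finset.sum_congr rfl fun q _ => Finset.sum_congr rfl fun r _ => by ring

lemma integral_quadForm_sub_sq [IsProbabilityMeasure μ] (hx : ∀ q, MemLp (fun ω => x ω q) 4 μ)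
    (B : Matrix n n ℝ) :
    ∫ ω, ((∑ q, ∑ r, x ω q * B q r * x ω r)
        - ∑ p : n × n, B p.1 p.2 * ∫ ω, x ω p.1 * x ω p.2 ∂μ) ^ 2 ∂μ
      = ∑ p : n × n, ∑ p' : n × n, B p.1 p.2 * B p'.1 p'.2
          * cov[fun ω => x ω p.1 * x ω p.2, fun ω => x ω p'.1 * x ω p'.2; μ] := by
  have hBξ (p : n × n) : MemLp (fun ω => B p.1 p.2 * (x ω p.1 * x ω p.2)) 2 μ :=
    ((hx p.2).mul' (hx p.1)).const_mul _
  have hmean : ∫ ω, ∑ p : n × n, B p.1 p.2 * (x ω p.1 * x ω p.2) ∂μ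
      = ∑ p : n × n, B p.1 p.2 * ∫ ω, x ω p.1 * x ω p.2 ∂μ := by
    rw [integral_finsetSum _ fun p _ => (hBξ p).integrable one_le_two]
    simp only [integral_const_mul]
  simp only [quadForm_eq_sum_pairs B, ← hmean, sq]
  rw [← covariance, covariance_fun_sum_fun_sum hBξ hBξ]
  refine Finset.sum_congr rfl fun p _ => Finset.sum_congr rfl fun p' _ => ?_
  rw [covariance_const_mul_left, covariance_const_mul_right, mul_assoc]

lemma integral_quadForm_sub_trace_sq [IsProbabilityMeasure μ]
    (hx : ∀ q, MemLp (fun ω => x ω q) 4 μ) {S : Matrix n n ℝ}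
    (hcov : ∀ q r, ∫ ω, x ω q * x ω r ∂μ = S q r) (B : Matrix n n ℝ) :
    ∫ ω, ((∑ q, ∑ r, x ω q * B q r * x ω r) - trace (B * S)) ^ 2 ∂μ
      = ∑ p : n × n, ∑ p' : n × n,
          B p.1 p.2 * B p'.1 p'.2 * cumulant4 μ (x · p.1) (x · p.2) (x · p'.1) (x · p'.2)
        + trace (B * S * Bᵀ * S) + trace (B * S * B * S) := by
  have hS : Sᵀ = S := by
    ext q r
    rw [transpose_apply, ← hcov, ← hcov]
    simp_rw [mul_comm]
  have htrace : trace (B * S) = ∑ p : n × n, B p.1 p.2 * ∫ ω, x ω p.1 * x ω p.2 ∂μ := by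
    conv_lhs => rw [← hS]
    simp [trace, mul_apply, Fintype.sum_prod_type, hcov]
  rw [htrace, integral_quadForm_sub_sq hx B]
  simp only [covariance_mul_mul (hx _) (hx _) (hx _) (hx _), hcov, mul_add,
    Finset.sum_add_distrib, sum_pairs_mul_mul_eq_trace_mul_transpose,
    sum_pairs_mul_mul_eq_trace_mul, hS]

end Cumulants

theorem stmt_8_general (d : ℕ) (C κ₄ : ℝ)
    (Ω : Type*) [MeasurableSpace Ω] (μ : Measure Ω) [IsProbabilityMeasure μ]
    (x : Ω → (Fin d → ℝ))
    (hL4 : ∀ q, MemLp (fun ω => x ω q) 4 μ)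
    (S : Matrix (Fin d) (Fin d) ℝ) (hpsd : S.PosSemidef) (hC : opNorm S ≤ C)
    (hcov : ∀ q r, ∫ ω, x ω q * x ω r ∂μ = S q r)
    (hκ₄ : ∀ q r, (∑ s, ∑ t,
        |(∫ ω, x ω q * x ω r * x ω s * x ω t ∂μ)
          - (∫ ω, x ω q * x ω r ∂μ) * (∫ ω, x ω s * x ω t ∂μ)
          - (∫ ω, x ω q * x ω s ∂μ) * (∫ ω, x ω r * x ω t ∂μ)
          - (∫ ω, x ω q * x ω t ∂μ) * (∫ ω, x ω r * x ω s ∂μ)|) ≤ κ₄)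
    (B : Matrix (Fin d) (Fin d) ℝ) :
    (∫ ω, ((∑ q, ∑ r, x ω q * B q r * x ω r) - Matrix.trace (B * S)) ^ 2 ∂μ)
      ≤ (2 * C ^ 2 + κ₄) * opNorm B ^ 2 * d := by
  rcases Nat.eq_zero_or_pos d with rfl | hd
  · simp [trace]
  have hκ₄_nonneg : 0 ≤ κ₄ := (Finset.sum_nonneg fun _ _ =>
    Finset.sum_nonneg fun _ _ => abs_nonneg _).trans (hκ₄ ⟨0, hd⟩ ⟨0, hd⟩)
  have hFrobenius := trace_transpose_mul_self_le B
  rw [Fintype.card_fin] at hFrobenius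
  calc _ = _ := integral_quadForm_sub_trace_sq hL4 hcov B
    _ ≤ κ₄ * trace (Bᵀ * B) + C ^ 2 * trace (Bᵀ * B) + C ^ 2 * trace (Bᵀ * B) := by
        gcongr ?_ + ?_ + ?_
        · exact sum_pairs_mul_mul_cumulant4_le hκ₄ B
        · exact trace_mul_mul_transpose_mul_le hpsd hC B
        · exact trace_mul_mul_mul_le hpsd hC B
    _ = (2 * C ^ 2 + κ₄) * trace (Bᵀ * B) := by ring
    _ ≤ (2 * C ^ 2 + κ₄) * (opNorm B ^ 2 * d) := by gcongr
    _ = (2 * C ^ 2 + κ₄) * opNorm B ^ 2 * d := by ring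

/-- concentration of quadratic forms, `k = 1` case: if `x ∈ ℝ^d` has mean-zero
coordinates with finite fourth moments, covariance `Σ` symmetric PSD with `‖Σ‖ ≤ C`, and
fourth-cumulant sums bounded by `κ₄`, then for every deterministic `B`,
`E|xᵀBx − Tr(BΣ)|² ≤ (2C² + κ₄) ‖B‖² d`. -/
theorem stmt_8 (d : ℕ) (C κ₄ : ℝ)
    (Ω : Type*) [MeasurableSpace Ω] (μ : Measure Ω) [IsProbabilityMeasure μ]
    (x : Ω → (Fin d → ℝ)) (hmeas : Measurable x)
    (hL4 : ∀ q, MemLp (fun ω => x ω q) 4 μ)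
    (hmean : ∀ q, ∫ ω, x ω q ∂μ = 0)
    (S : Matrix (Fin d) (Fin d) ℝ) (hpsd : S.PosSemidef) (hC : opNorm S ≤ C)
    (hcov : ∀ q r, ∫ ω, x ω q * x ω r ∂μ = S q r)
    (hκ₄ : ∀ q r, (∑ s, ∑ t,
        |(∫ ω, x ω q * x ω r * x ω s * x ω t ∂μ)
          - (∫ ω, x ω q * x ω r ∂μ) * (∫ ω, x ω s * x ω t ∂μ)
          - (∫ ω, x ω q * x ω s ∂μ) * (∫ ω, x ω r * x ω t ∂μ)
          - (∫ ω, x ω q * x ω t ∂μ) * (∫ ω, x ω r * x ω s ∂μ)|) ≤ κ₄)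
    (B : Matrix (Fin d) (Fin d) ℝ) :
    (∫ ω, ((∑ q, ∑ r, x ω q * B q r * x ω r) - Matrix.trace (B * S)) ^ 2 ∂μ)
      ≤ (2 * C ^ 2 + κ₄) * opNorm B ^ 2 * d :=
  stmt_8_general d C κ₄ Ω μ x hL4 S hpsd hC hcov hκ₄ B
end

section
/- Let k ≥ 1, let Σ⁽¹⁾, …, Σ⁽ᵏ⁾ be real symmetric matrices, Σ⁽ⁱ⁾ ∈ ℝ^{d_i×d_i}, with operator norms ‖Σ⁽ⁱ⁾‖ ≤ C, and let B be a real array indexed by pairs of multi-indices u, v ∈ [d₁]×⋯×[d_k], with operator norm ‖B‖ as a linear map on ℝ^{d₁⋯d_k}. Then for every m ∈ {0, 1, …, k}, | Σ_{u,v,u',v'} ( ∏_{i=1}^{m} σ⁽ⁱ⁾_{u_i u'_i} σ⁽ⁱ⁾_{v_i v'_i} ) ( ∏_{j=m+1}^{k} σ⁽ʲ⁾_{u_j v'_j} σ⁽ʲ⁾_{u'_j v_j} ) b_{uv} b_{u'v'} | ≤ C^{2k} ‖B‖² (∏_{i=1}^k d_i)^{3/2}, where the sum runs over all multi-indices u,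 v, u', v' ∈ [d₁]×⋯×[d_k]. -/
lemma opNorm_mulVec_sq {n : Type*} [Fintype n] [DecidableEq n] (A : Matrix n n ℝ) (x : n → ℝ) :
    ∑ q, (∑ r, A q r * x r) ^ 2 ≤ opNorm A ^ 2 * ∑ r, x r ^ 2 := by
  have h := (LinearMap.toContinuousLinearMap (Matrix.toEuclideanLin A)).le_opNorm
    ((WithLp.equiv 2 (n → ℝ)).symm x)
  have hsq := pow_le_pow_left₀ (norm_nonneg _) h 2
  rw [mul_pow] at hsq
  have hnorm : ∀ y : n → ℝ, ‖(WithLp.equiv 2 (n → ℝ)).symm y‖ ^ 2 = ∑ r, y r ^ 2 := by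
    intro y
    rw [EuclideanSpace.norm_eq, Real.sq_sqrt (by positivity)]
    simp [sq_abs]
  have happ : (LinearMap.toContinuousLinearMap (Matrix.toEuclideanLin A))
      ((WithLp.equiv 2 (n → ℝ)).symm x) = (WithLp.equiv 2 (n → ℝ)).symm (A.mulVec x) := rfl
  rw [happ, hnorm, hnorm] at hsq
  have hmv : ∀ q, (A.mulVec x) q = ∑ r, A q r * x r := fun q => rfl
  simp_rw [hmv] at hsq
  exact hsq

lemma kron_bound : ∀ (k : ℕ) (d : Fin k → ℕ) (S : ∀ i, Matrix (Fin (d i)) (Fin (d i)) ℝ)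
    (c : Fin k → ℝ) (hc : ∀ i, 0 ≤ c i)
    (hS : ∀ i (x : Fin (d i) → ℝ), ∑ q, (∑ r, S i q r * x r) ^ 2 ≤ c i * ∑ r, x r ^ 2)
    (x : (∀ i, Fin (d i)) → ℝ),
    ∑ u : (∀ i, Fin (d i)), (∑ w : (∀ i, Fin (d i)), (∏ i, S i (u i) (w i)) * x w) ^ 2
      ≤ (∏ i, c i) * ∑ w : (∀ i, Fin (d i)), x w ^ 2 := by
  intro k
  induction k with
  | zero =>
    intro d S c hc hS x
    simp
  | succ k ih =>
    intro d S c hc hS x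
    set d' : Fin k → ℕ := fun i => d i.succ with hd'
    set S' : ∀ i : Fin k, Matrix (Fin (d' i)) (Fin (d' i)) ℝ := fun i => S i.succ with hS'def
    set c' : Fin k → ℝ := fun i => c i.succ with hc'
    have hS'' : ∀ i (x : Fin (d' i) → ℝ),
        ∑ q, (∑ r, S' i q r * x r) ^ 2 ≤ c' i * ∑ r, x r ^ 2 := fun i => hS i.succ
    set e := Fin.consEquiv (fun i : Fin (k+1) => Fin (d i)) with he
    set cns : Fin (d 0) → (∀ i : Fin k, Fin (d' i)) → (∀ i : Fin (k+1), Fin (d i)) :=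
      fun a u => Fin.cons a u with hcns
    set y : Fin (d 0) → ((∀ i : Fin k, Fin (d' i)) → ℝ) :=
      fun b u => ∑ w, (∏ i, S' i (u i) (w i)) * x (cns b w) with hy
    have key : ∀ (a : Fin (d 0)) (u' : ∀ i : Fin k, Fin (d' i)),
        (∑ w : (∀ i : Fin (k+1), Fin (d i)), (∏ i, S i (cns a u' i) (w i)) * x w)
          = ∑ b, S 0 a b * y b u' := by
      intro a u'
      rw [← Equiv.sum_comp e (fun w => (∏ i, S i (cns a u' i) (w i)) * x w),
        Fintype.sum_prod_type]
      refine Finset.sum_congr rfl fun b _ => ?_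
      rw [hy, Finset.mul_sum]
      refine Finset.sum_congr rfl fun w' _ => ?_
      have he1 : e (b, w') = cns b w' := rfl
      rw [he1, Fin.prod_univ_succ]
      simp only [hcns, hS'def, Fin.cons_zero, Fin.cons_succ]
      ring
    have hsum : ∀ f : (∀ i : Fin (k+1), Fin (d i)) → ℝ,
        ∑ u, f u = ∑ a, ∑ u', f (cns a u') := by
      intro f
      rw [← Equiv.sum_comp e f, Fintype.sum_prod_type]
      rfl
    rw [hsum (fun u => (∑ w, (∏ i, S i (u i) (w i)) * x w) ^ 2), hsum (fun w => x w ^ 2)]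
    simp_rw [key]
    calc ∑ a, ∑ u', (∑ b, S 0 a b * y b u') ^ 2
        = ∑ u', ∑ a, (∑ b, S 0 a b * y b u') ^ 2 := Finset.sum_comm
      _ ≤ ∑ u', c 0 * ∑ b, (y b u') ^ 2 := by
          refine Finset.sum_le_sum fun u' _ => hS 0 (fun b => y b u')
      _ = c 0 * ∑ b, ∑ u', (y b u') ^ 2 := by
          rw [← Finset.mul_sum, Finset.sum_comm]
      _ ≤ c 0 * ∑ b, ((∏ i : Fin k, c' i) * ∑ w' : (∀ i : Fin k, Fin (d' i)), x (cns b w') ^ 2) := by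
          refine mul_le_mul_of_nonneg_left (Finset.sum_le_sum fun b _ => ?_) (hc 0)
          exact ih d' S' c' (fun i => hc i.succ) hS'' (fun w' => x (cns b w'))
      _ = (∏ i, c i) * ∑ b, ∑ w' : (∀ i : Fin k, Fin (d' i)), x (cns b w') ^ 2 := by
          rw [Fin.prod_univ_succ, ← Finset.mul_sum, hc']; ring

lemma frobenius_le {I : Type*} [Fintype I] [DecidableEq I] (B : Matrix I I ℝ) :
    ∑ u, ∑ v, B u v ^ 2 ≤ opNorm B ^ 2 * Fintype.card I := by
  rw [Finset.sum_comm]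
  have h : ∀ v, ∑ u, B u v ^ 2 ≤ opNorm B ^ 2 := by
    intro v
    have h2 := opNorm_mulVec_sq B (Pi.single v 1)
    simpa [Pi.single_apply, mul_ite, Finset.sum_ite_eq'] using h2
  calc ∑ v, ∑ u, B u v ^ 2 ≤ ∑ _v : I, opNorm B ^ 2 := Finset.sum_le_sum fun v _ => h v
    _ = opNorm B ^ 2 * Fintype.card I := by simp [mul_comm]

lemma core_bound (k : ℕ) (d : Fin k → ℕ)
    (S : ∀ i, Matrix (Fin (d i)) (Fin (d i)) ℝ)
    (B B2 : Matrix (∀ i, Fin (d i)) (∀ i, Fin (d i)) ℝ)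
    (hB2 : ∑ w, ∑ z, B2 w z ^ 2 = ∑ u, ∑ v, B u v ^ 2) :
    |∑ u, ∑ v, B u v * (∑ w, (∏ i, S i (u i) (w i)) *
        (∑ z, (∏ i, S i (v i) (z i)) * B2 w z))|
      ≤ (∏ i, opNorm (S i) ^ 2) * ∑ u, ∑ v, B u v ^ 2 := by
  classical
  let P := ∀ i, Fin (d i)
  set ct : ℝ := ∏ i, opNorm (S i) ^ 2 with hct
  have hct0 : 0 ≤ ct := Finset.prod_nonneg fun i _ => sq_nonneg _
  set N : Matrix P P ℝ := fun w v => ∑ z, (∏ i, S i (v i) (z i)) * B2 w z with hN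
  set M : Matrix P P ℝ := fun u v => ∑ w, (∏ i, S i (u i) (w i)) * N w v with hM
  have hkron : ∀ x : P → ℝ,
      ∑ u : P, (∑ w : P, (∏ i, S i (u i) (w i)) * x w) ^ 2 ≤ ct * ∑ w : P, x w ^ 2 :=
    kron_bound k d S (fun i => opNorm (S i) ^ 2) (fun i => sq_nonneg _)
      (fun i => opNorm_mulVec_sq (S i))
  have hBsq : (0:ℝ) ≤ ∑ u, ∑ v, B u v ^ 2 :=
    Finset.sum_nonneg fun u _ => Finset.sum_nonneg fun v _ => sq_nonneg _
  have hMsum : ∑ u, ∑ v, M u v ^ 2 ≤ ct ^ 2 * ∑ u, ∑ v, B u v ^ 2 := by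
    calc ∑ u, ∑ v, M u v ^ 2 = ∑ v, ∑ u, M u v ^ 2 := Finset.sum_comm
      _ ≤ ∑ v, ct * ∑ w, N w v ^ 2 :=
          Finset.sum_le_sum fun v _ => hkron (fun w => N w v)
      _ = ct * ∑ w, ∑ v, N w v ^ 2 := by rw [← Finset.mul_sum, Finset.sum_comm]
      _ ≤ ct * ∑ w, (ct * ∑ z, B2 w z ^ 2) := by
          refine mul_le_mul_of_nonneg_left (Finset.sum_le_sum fun w _ => ?_) hct0
          exact hkron (fun z => B2 w z)
      _ = ct ^ 2 * ∑ u, ∑ v, B u v ^ 2 := by rw [← Finset.mul_sum, ← hB2]; ring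
  have hT : (∑ u, ∑ v, B u v * M u v) ^ 2
      ≤ (∑ u, ∑ v, B u v ^ 2) * ∑ u, ∑ v, M u v ^ 2 := by
    rw [← Fintype.sum_prod_type (f := fun p : P × P => B p.1 p.2 * M p.1 p.2),
      ← Fintype.sum_prod_type (f := fun p : P × P => B p.1 p.2 ^ 2),
      ← Fintype.sum_prod_type (f := fun p : P × P => M p.1 p.2 ^ 2)]
    exact Finset.sum_mul_sq_le_sq_mul_sq _ _ _
  have hT2 : (∑ u, ∑ v, B u v * M u v) ^ 2 ≤ (ct * ∑ u, ∑ v, B u v ^ 2) ^ 2 := by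
    calc (∑ u, ∑ v, B u v * M u v) ^ 2
        ≤ (∑ u, ∑ v, B u v ^ 2) * ∑ u, ∑ v, M u v ^ 2 := hT
      _ ≤ (∑ u, ∑ v, B u v ^ 2) * (ct ^ 2 * ∑ u, ∑ v, B u v ^ 2) :=
          mul_le_mul_of_nonneg_left hMsum hBsq
      _ = (ct * ∑ u, ∑ v, B u v ^ 2) ^ 2 := by ring
  have habs : |∑ u, ∑ v, B u v * M u v| ≤ ct * ∑ u, ∑ v, B u v ^ 2 := by
    have := Real.sqrt_le_sqrt hT2
    rw [Real.sqrt_sq_eq_abs, Real.sqrt_sq (mul_nonneg hct0 hBsq)] at this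
    exact this
  exact habs


/-- bound on the mixed `II`/`III` contraction, with the first `m` factors of
type `II⁽ⁱ⁾ = σ⁽ⁱ⁾_{uᵢu'ᵢ}σ⁽ⁱ⁾_{vᵢv'ᵢ}` and the remaining factors of type
`III⁽ʲ⁾ = σ⁽ʲ⁾_{uⱼv'ⱼ}σ⁽ʲ⁾_{u'ⱼvⱼ}`:
`|Σ_{u,v,u',v'} (∏ ...) b_{uv} b_{u'v'}| ≤ C^{2k} ‖B‖² (∏ dᵢ)^{3/2}`. -/
theorem stmt_9 (k : ℕ) (hk : 1 ≤ k) (d : Fin k → ℕ) (C : ℝ)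
    (S : ∀ i : Fin k, Matrix (Fin (d i)) (Fin (d i)) ℝ)
    (hsym : ∀ i, (S i).IsSymm) (hC : ∀ i, opNorm (S i) ≤ C)
    (B : Matrix (∀ i, Fin (d i)) (∀ i, Fin (d i)) ℝ)
    (m : ℕ) (hm : m ≤ k) :
    |(∑ u, ∑ v, ∑ u', ∑ v',
        (∏ i : Fin k,
          if (i : ℕ) < m then S i (u i) (u' i) * S i (v i) (v' i)
          else S i (u i) (v' i) * S i (u' i) (v i)) * B u v * B u' v')|
      ≤ C ^ (2 * k) * opNorm B ^ 2 * (∏ i, (d i : ℝ)) ^ ((3 : ℝ) / 2) := by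
  classical
  set ψ : ((∀ i, Fin (d i)) × (∀ i, Fin (d i))) → ((∀ i, Fin (d i)) × (∀ i, Fin (d i))) :=
    fun p => (fun i => if (i:ℕ) < m then p.1 i else p.2 i,
              fun i => if (i:ℕ) < m then p.2 i else p.1 i) with hψ
  have hinv : Function.Involutive ψ := by
    intro p
    ext i <;> by_cases h : (i:ℕ) < m <;> simp [hψ, h]
  set B2 : Matrix (∀ i, Fin (d i)) (∀ i, Fin (d i)) ℝ :=
    fun w z => B (ψ (w,z)).1 (ψ (w,z)).2 with hB2def
  have hB2 : ∑ w, ∑ z, B2 w z ^ 2 = ∑ u, ∑ v, B u v ^ 2 := by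
    rw [← Fintype.sum_prod_type (f := fun p : ((∀ i, Fin (d i)) × (∀ i, Fin (d i))) => B2 p.1 p.2 ^ 2),
      ← Fintype.sum_prod_type (f := fun p : ((∀ i, Fin (d i)) × (∀ i, Fin (d i))) => B p.1 p.2 ^ 2),
      ← Equiv.sum_comp hinv.toPerm (fun p : ((∀ i, Fin (d i)) × (∀ i, Fin (d i))) => B p.1 p.2 ^ 2)]
    refine Finset.sum_congr rfl fun p _ => ?_
    simp only [Function.Involutive.coe_toPerm, hB2def]
  have hprod : ∀ u v u' v' : (∀ i, Fin (d i)),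
      (∏ i : Fin k, if (i:ℕ) < m then S i (u i) (u' i) * S i (v i) (v' i)
        else S i (u i) (v' i) * S i (u' i) (v i))
      = (∏ i, S i (u i) ((ψ (u', v')).1 i)) * (∏ i, S i (v i) ((ψ (u', v')).2 i)) := by
    intro u v u' v'
    rw [← Finset.prod_mul_distrib]
    refine Finset.prod_congr rfl fun i _ => ?_
    by_cases h : (i:ℕ) < m
    · simp [hψ, h]
    · simp only [hψ, if_neg h]
      rw [(hsym i).apply (v i) (u' i)]
  have step1 : ∀ u v : (∀ i, Fin (d i)),
      (∑ u', ∑ v', (∏ i : Fin k, if (i : ℕ) < m then S i (u i) (u' i) * S i (v i) (v' i)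
          else S i (u i) (v' i) * S i (u' i) (v i)) * B u v * B u' v')
      = B u v * (∑ w, (∏ i, S i (u i) (w i)) * (∑ z, (∏ i, S i (v i) (z i)) * B2 w z)) := by
    intro u v
    rw [← Fintype.sum_prod_type (f := fun p : ((∀ i, Fin (d i)) × (∀ i, Fin (d i))) =>
      (∏ i : Fin k, if (i : ℕ) < m then S i (u i) (p.1 i) * S i (v i) (p.2 i)
          else S i (u i) (p.2 i) * S i (p.1 i) (v i)) * B u v * B p.1 p.2)]
    have hFG : ∀ p : ((∀ i, Fin (d i)) × (∀ i, Fin (d i))),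
        (∏ i : Fin k, if (i : ℕ) < m then S i (u i) (p.1 i) * S i (v i) (p.2 i)
          else S i (u i) (p.2 i) * S i (p.1 i) (v i)) * B u v * B p.1 p.2
        = ((∏ i, S i (u i) ((ψ p).1 i)) * (∏ i, S i (v i) ((ψ p).2 i))) * B u v
            * B2 (ψ p).1 (ψ p).2 := by
      intro p
      rw [hprod u v p.1 p.2]
      congr 1
      rw [hB2def]
      show B p.1 p.2 = B (ψ (ψ p)).1 (ψ (ψ p)).2
      rw [hinv p]
    calc ∑ p : ((∀ i, Fin (d i)) × (∀ i, Fin (d i))),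
          (∏ i : Fin k, if (i : ℕ) < m then S i (u i) (p.1 i) * S i (v i) (p.2 i)
            else S i (u i) (p.2 i) * S i (p.1 i) (v i)) * B u v * B p.1 p.2
        = ∑ p : ((∀ i, Fin (d i)) × (∀ i, Fin (d i))),
            ((∏ i, S i (u i) (p.1 i)) * (∏ i, S i (v i) (p.2 i))) * B u v * B2 p.1 p.2 := by
          rw [← Equiv.sum_comp hinv.toPerm (fun p : ((∀ i, Fin (d i)) × (∀ i, Fin (d i))) =>
            ((∏ i, S i (u i) (p.1 i)) * (∏ i, S i (v i) (p.2 i))) * B u v * B2 p.1 p.2)]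
          refine Finset.sum_congr rfl fun p _ => ?_
          simp only [Function.Involutive.coe_toPerm]
          exact hFG p
      _ = B u v * (∑ w, (∏ i, S i (u i) (w i)) * (∑ z, (∏ i, S i (v i) (z i)) * B2 w z)) := by
          rw [Fintype.sum_prod_type]
          simp only [Finset.mul_sum]
          refine Finset.sum_congr rfl fun w _ => Finset.sum_congr rfl fun z _ => by ring
  have main_eq : (∑ u, ∑ v, ∑ u', ∑ v',
        (∏ i : Fin k,
          if (i : ℕ) < m then S i (u i) (u' i) * S i (v i) (v' i)
          else S i (u i) (v' i) * S i (u' i) (v i)) * B u v * B u' v')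
      = ∑ u, ∑ v, B u v * (∑ w, (∏ i, S i (u i) (w i)) *
          (∑ z, (∏ i, S i (v i) (z i)) * B2 w z)) :=
    Finset.sum_congr rfl fun u _ => Finset.sum_congr rfl fun v _ => step1 u v
  rw [main_eq]
  have hcore := core_bound k d S B B2 hB2
  have hC0 : 0 ≤ C := le_trans (norm_nonneg _) (hC ⟨0, hk⟩)
  have hBsq : (0:ℝ) ≤ ∑ u, ∑ v, B u v ^ 2 :=
    Finset.sum_nonneg fun u _ => Finset.sum_nonneg fun v _ => sq_nonneg _
  have h1 : (∏ i, opNorm (S i) ^ 2) ≤ C ^ (2 * k) := by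
    calc (∏ i, opNorm (S i) ^ 2) ≤ ∏ _i : Fin k, C ^ 2 := by
          refine Finset.prod_le_prod (fun i _ => sq_nonneg _) (fun i _ => ?_)
          exact pow_le_pow_left₀ (norm_nonneg _) (hC i) 2
      _ = C ^ (2 * k) := by rw [Finset.prod_const, Finset.card_univ, Fintype.card_fin, pow_mul]
  have h2 : (∑ u, ∑ v, B u v ^ 2) ≤ opNorm B ^ 2 * ∏ i, (d i : ℝ) := by
    have := frobenius_le B
    have hcard : (Fintype.card (∀ i, Fin (d i)) : ℝ) = ∏ i, (d i : ℝ) := by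
      rw [Fintype.card_pi]
      push_cast
      simp
    rw [hcard] at this
    exact this
  have hD0 : (0:ℝ) ≤ ∏ i, (d i : ℝ) := Finset.prod_nonneg fun i _ => Nat.cast_nonneg _
  have h3 : (∏ i, (d i : ℝ)) ≤ (∏ i, (d i : ℝ)) ^ ((3:ℝ)/2) := by
    rcases eq_or_lt_of_le hD0 with h | h
    · rw [← h, Real.zero_rpow (by norm_num)]
    · have h1le : (1:ℝ) ≤ ∏ i, (d i : ℝ) := by
        have : (∏ i, (d i : ℝ)) = ((∏ i, d i : ℕ) : ℝ) := by push_cast; ring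
        rw [this] at h ⊢
        exact_mod_cast Nat.one_le_iff_ne_zero.mpr (by exact_mod_cast h.ne')
      nth_rewrite 1 [← Real.rpow_one (∏ i, (d i : ℝ))]
      exact Real.rpow_le_rpow_of_exponent_le h1le (by norm_num)
  calc |∑ u, ∑ v, B u v * (∑ w, (∏ i, S i (u i) (w i)) *
          (∑ z, (∏ i, S i (v i) (z i)) * B2 w z))|
      ≤ (∏ i, opNorm (S i) ^ 2) * ∑ u, ∑ v, B u v ^ 2 := hcore
    _ ≤ C ^ (2 * k) * ∑ u, ∑ v, B u v ^ 2 := mul_le_mul_of_nonneg_right h1 hBsq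
    _ ≤ C ^ (2 * k) * (opNorm B ^ 2 * ∏ i, (d i : ℝ)) :=
        mul_le_mul_of_nonneg_left h2 (pow_nonneg hC0 _)
    _ = C ^ (2 * k) * opNorm B ^ 2 * ∏ i, (d i : ℝ) := by ring
    _ ≤ C ^ (2 * k) * opNorm B ^ 2 * (∏ i, (d i : ℝ)) ^ ((3:ℝ)/2) := by
        refine mul_le_mul_of_nonneg_left h3 ?_
        exact mul_nonneg (pow_nonneg hC0 _) (sq_nonneg _)
end

section
/- Let k ≥ 1, let Σ⁽¹⁾, …, Σ⁽ᵏ⁾ be real symmetric matrices, Σ⁽ⁱ⁾ ∈ ℝ^{d_i×d_i}, with operator norms ‖Σ⁽ⁱ⁾‖ ≤ C, and let B be a real array indexed by pairs of multi-indices u, v ∈ [d₁]×⋯×[d_k], with operator norm ‖B‖. For each i write II⁽ⁱ⁾_{u v u' v'} = σ⁽ⁱ⁾_{u u'} σ⁽ⁱ⁾_{v v'} and III⁽ⁱ⁾_{u v u' v'} = σ⁽ⁱ⁾_{u v'} σ⁽ⁱ⁾_{u' v} (with u, v, u', v' ∈ [d_i]). Then Σ_{u,v,u',v'} ( ∏_{i=1}^{k}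 ( II⁽ⁱ⁾ + III⁽ⁱ⁾ )_{u_i v_i u'_i v'_i} ) b_{uv} b_{u'v'} ≤ 2^k C^{2k} ‖B‖² (∏_{i=1}^k d_i)^{3/2}, where the sum runs over all multi-indices u, v, u', v' ∈ [d₁]×⋯×[d_k]. -/
lemma opNorm_nonneg_s10 {I : Type*} [Fintype I] [DecidableEq I] (A : Matrix I I ℝ) :
    0 ≤ opNorm A := norm_nonneg _

lemma euclid_norm {I : Type*} [Fintype I] (y : EuclideanSpace ℝ I) :
    ‖y‖ = Real.sqrt (∑ p, (y p) ^ 2) := by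
  rw [EuclideanSpace.norm_eq]
  congr 1
  exact Finset.sum_congr rfl fun p _ => by rw [Real.norm_eq_abs, sq_abs]

lemma norm_form {I : Type*} [Fintype I] [DecidableEq I] (A : Matrix I I ℝ) (x : I → ℝ) :
    ∑ p, (∑ q, A p q * x q) ^ 2 ≤ opNorm A ^ 2 * ∑ q, (x q) ^ 2 := by
  have h := (LinearMap.toContinuousLinearMap (Matrix.toEuclideanLin A)).le_opNorm
      ((WithLp.equiv 2 (I → ℝ)).symm x)
  have e1 : ‖LinearMap.toContinuousLinearMap (Matrix.toEuclideanLin A)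
      ((WithLp.equiv 2 (I → ℝ)).symm x)‖ = Real.sqrt (∑ p, (∑ q, A p q * x q) ^ 2) := by
    rw [euclid_norm]
    congr 1
  have e2 : ‖(WithLp.equiv 2 (I → ℝ)).symm x‖ = Real.sqrt (∑ q, (x q) ^ 2) := by
    rw [euclid_norm]
    congr 1
  rw [e1, e2] at h
  have h1 : (0:ℝ) ≤ ∑ q, (x q) ^ 2 := Finset.sum_nonneg fun _ _ => sq_nonneg _
  have h2 : (0:ℝ) ≤ ∑ p, (∑ q, A p q * x q) ^ 2 := Finset.sum_nonneg fun _ _ => sq_nonneg _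
  calc ∑ p, (∑ q, A p q * x q) ^ 2
      = Real.sqrt (∑ p, (∑ q, A p q * x q) ^ 2) ^ 2 := (Real.sq_sqrt h2).symm
    _ ≤ (opNorm A * Real.sqrt (∑ q, (x q) ^ 2)) ^ 2 := by
        apply pow_le_pow_left₀ (Real.sqrt_nonneg _) h
    _ = opNorm A ^ 2 * ∑ q, (x q) ^ 2 := by
        rw [mul_pow, Real.sq_sqrt h1]

lemma opNorm_le_of {I : Type*} [Fintype I] [DecidableEq I] (A : Matrix I I ℝ) {c : ℝ}
    (hc : 0 ≤ c)
    (h : ∀ x : I → ℝ, ∑ p, (∑ q, A p q * x q) ^ 2 ≤ c ^ 2 * ∑ q, (x q) ^ 2) :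
    opNorm A ≤ c := by
  apply ContinuousLinearMap.opNorm_le_bound _ hc
  intro x
  have e1 : ‖LinearMap.toContinuousLinearMap (Matrix.toEuclideanLin A) x‖
      = Real.sqrt (∑ p, (∑ q, A p q * x q) ^ 2) := by
    rw [euclid_norm]
    congr 1
  have e2 : ‖x‖ = Real.sqrt (∑ q, (x q) ^ 2) := euclid_norm x
  rw [e1, e2, ← Real.sqrt_sq hc, ← Real.sqrt_mul (sq_nonneg c)]
  exact Real.sqrt_le_sqrt (h x)

lemma key {α β : Type*} [Fintype α] [DecidableEq α] [Fintype β]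
    (A : Matrix α α ℝ) {c : ℝ} (hA : opNorm A ≤ c) (w : α → β → ℝ) :
    ∑ b : β, ∑ a : α, (∑ a' : α, A a a' * w a' b) ^ 2
      ≤ c ^ 2 * ∑ b : β, ∑ a' : α, (w a' b) ^ 2 := by
  rw [Finset.mul_sum]
  apply Finset.sum_le_sum
  intro b _
  calc ∑ a, (∑ a', A a a' * w a' b) ^ 2
      ≤ opNorm A ^ 2 * ∑ a', (w a' b) ^ 2 := norm_form A _
    _ ≤ c ^ 2 * ∑ a', (w a' b) ^ 2 := by
        apply mul_le_mul_of_nonneg_right (pow_le_pow_left₀ (opNorm_nonneg_s10 _) hA 2)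
        exact Finset.sum_nonneg fun _ _ => sq_nonneg _

lemma opNorm_add_le {I : Type*} [Fintype I] [DecidableEq I] (A B : Matrix I I ℝ) :
    opNorm (A + B) ≤ opNorm A + opNorm B := by
  unfold opNorm
  rw [map_add, map_add]
  exact norm_add_le _ _
lemma opNorm_II {α : Type*} [Fintype α] [DecidableEq α] (S : Matrix α α ℝ) {C : ℝ}
    (hC : opNorm S ≤ C) :
    opNorm (Matrix.of fun (p q : α × α) => S p.1 q.1 * S p.2 q.2) ≤ C ^ 2 := by
  have hC0 : 0 ≤ C := le_trans (opNorm_nonneg_s10 _) hC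
  apply opNorm_le_of _ (by positivity)
  intro x
  set z : α → α → ℝ := fun q₁ p₂ => ∑ q₂, S p₂ q₂ * x (q₁, q₂) with hz
  have hinner : ∀ p : α × α,
      (∑ q : α × α, (Matrix.of fun (p q : α × α) => S p.1 q.1 * S p.2 q.2) p q * x q)
      = ∑ q₁, S p.1 q₁ * z q₁ p.2 := by
    intro p
    rw [Fintype.sum_prod_type]
    refine Finset.sum_congr rfl fun q₁ _ => ?_
    rw [hz, Finset.mul_sum]
    exact Finset.sum_congr rfl fun q₂ _ => by simp only [Matrix.of_apply]; ring
  calc ∑ p : α × α, (∑ q : α × α,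
          (Matrix.of fun (p q : α × α) => S p.1 q.1 * S p.2 q.2) p q * x q) ^ 2
      = ∑ p₁ : α, ∑ p₂ : α, (∑ q₁, S p₁ q₁ * z q₁ p₂) ^ 2 := by
        rw [Fintype.sum_prod_type]
        exact Finset.sum_congr rfl fun p₁ _ => Finset.sum_congr rfl fun p₂ _ => by
          rw [hinner (p₁, p₂)]
    _ = ∑ p₂ : α, ∑ p₁ : α, (∑ q₁, S p₁ q₁ * z q₁ p₂) ^ 2 := Finset.sum_comm
    _ ≤ C ^ 2 * ∑ p₂ : α, ∑ q₁ : α, (z q₁ p₂) ^ 2 := key S hC z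
    _ = C ^ 2 * ∑ q₁ : α, ∑ p₂ : α, (∑ q₂, S p₂ q₂ * x (q₁, q₂)) ^ 2 := by
        rw [Finset.sum_comm]
    _ ≤ C ^ 2 * (C ^ 2 * ∑ q₁ : α, ∑ q₂ : α, (x (q₁, q₂)) ^ 2) := by
        exact mul_le_mul_of_nonneg_left (key S hC fun q₂ q₁ => x (q₁, q₂)) (by positivity)
    _ = (C ^ 2) ^ 2 * ∑ q : α × α, (x q) ^ 2 := by rw [Fintype.sum_prod_type]; ring

lemma opNorm_III {α : Type*} [Fintype α] [DecidableEq α] (S : Matrix α α ℝ) (hS : S.IsSymm)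
    {C : ℝ} (hC : opNorm S ≤ C) :
    opNorm (Matrix.of fun (p q : α × α) => S p.1 q.2 * S q.1 p.2) ≤ C ^ 2 := by
  have hC0 : 0 ≤ C := le_trans (opNorm_nonneg_s10 _) hC
  apply opNorm_le_of _ (by positivity)
  intro x
  set z : α → α → ℝ := fun q₂ p₂ => ∑ q₁, S p₂ q₁ * x (q₁, q₂) with hz
  have hinner : ∀ p : α × α,
      (∑ q : α × α, (Matrix.of fun (p q : α × α) => S p.1 q.2 * S q.1 p.2) p q * x q)
      = ∑ q₂, S p.1 q₂ * z q₂ p.2 := by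
    intro p
    rw [Fintype.sum_prod_type, Finset.sum_comm]
    refine Finset.sum_congr rfl fun q₂ _ => ?_
    rw [hz, Finset.mul_sum]
    refine Finset.sum_congr rfl fun q₁ _ => ?_
    simp only [Matrix.of_apply]
    rw [hS.apply q₁ p.2]
    ring
  calc ∑ p : α × α, (∑ q : α × α,
          (Matrix.of fun (p q : α × α) => S p.1 q.2 * S q.1 p.2) p q * x q) ^ 2
      = ∑ p₁ : α, ∑ p₂ : α, (∑ q₂, S p₁ q₂ * z q₂ p₂) ^ 2 := by
        rw [Fintype.sum_prod_type]
        exact Finset.sum_congr rfl fun p₁ _ => Finset.sum_congr rfl fun p₂ _ => by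
          rw [hinner (p₁, p₂)]
    _ = ∑ p₂ : α, ∑ p₁ : α, (∑ q₂, S p₁ q₂ * z q₂ p₂) ^ 2 := Finset.sum_comm
    _ ≤ C ^ 2 * ∑ p₂ : α, ∑ q₂ : α, (z q₂ p₂) ^ 2 := key S hC z
    _ = C ^ 2 * ∑ q₂ : α, ∑ p₂ : α, (∑ q₁, S p₂ q₁ * x (q₁, q₂)) ^ 2 := by
        rw [Finset.sum_comm]
    _ ≤ C ^ 2 * (C ^ 2 * ∑ q₂ : α, ∑ q₁ : α, (x (q₁, q₂)) ^ 2) := by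
        exact mul_le_mul_of_nonneg_left (key S hC fun q₁ q₂ => x (q₁, q₂)) (by positivity)
    _ = (C ^ 2) ^ 2 * ∑ q : α × α, (x q) ^ 2 := by
        rw [Fintype.sum_prod_type, Finset.sum_comm]; ring

lemma opNorm_pair {α : Type*} [Fintype α] [DecidableEq α] (S : Matrix α α ℝ) (hS : S.IsSymm)
    {C : ℝ} (hC : opNorm S ≤ C) :
    opNorm (Matrix.of fun (p q : α × α) => S p.1 q.1 * S p.2 q.2 + S p.1 q.2 * S q.1 p.2)
      ≤ 2 * C ^ 2 := by
  have : (Matrix.of fun (p q : α × α) => S p.1 q.1 * S p.2 q.2 + S p.1 q.2 * S q.1 p.2)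
      = (Matrix.of fun (p q : α × α) => S p.1 q.1 * S p.2 q.2)
        + (Matrix.of fun (p q : α × α) => S p.1 q.2 * S q.1 p.2) := rfl
  rw [this, two_mul]
  exact le_trans (opNorm_add_le _ _) (add_le_add (opNorm_II S hC) (opNorm_III S hS hC))
lemma tensor_norm (k : ℕ) :
    ∀ (ι : Fin k → Type) [∀ i, Fintype (ι i)] [∀ i, DecidableEq (ι i)]
      (N : ∀ i, Matrix (ι i) (ι i) ℝ) (c : Fin k → ℝ),
      (∀ i, 0 ≤ c i) → (∀ i, opNorm (N i) ≤ c i) →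
      ∀ x : (∀ i, ι i) → ℝ,
      ∑ p : (∀ i, ι i), (∑ q : (∀ i, ι i), (∏ i, N i (p i) (q i)) * x q) ^ 2
        ≤ (∏ i, c i) ^ 2 * ∑ q : (∀ i, ι i), (x q) ^ 2 := by
  induction k with
  | zero =>
    intro ι _ _ N c hc hN x
    haveI : Unique (∀ i : Fin 0, ι i) := Pi.uniqueOfIsEmpty ι
    rw [Fintype.sum_unique fun p : (∀ i : Fin 0, ι i) => (∑ q : (∀ i : Fin 0, ι i), (∏ i, N i (p i) (q i)) * x q) ^ 2,
      Fintype.sum_unique fun q : (∀ i : Fin 0, ι i) => (∏ i, N i ((default : ∀ i : Fin 0, ι i) i) (q i)) * x q,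
      Fintype.sum_unique fun q : (∀ i : Fin 0, ι i) => (x q) ^ 2]
    simp
  | succ k ih =>
    intro ι _ _ N c hc hN x
    have hsum : ∀ f : (∀ i : Fin (k + 1), ι i) → ℝ,
        ∑ p, f p = ∑ a : ι 0, ∑ r : (∀ i : Fin k, ι i.succ), f (Fin.cons a r) := by
      intro f
      rw [← Equiv.sum_comp (Fin.consEquiv ι) f, Fintype.sum_prod_type]
      rfl
    set w : ι 0 → (∀ i : Fin k, ι i.succ) → ℝ := fun a' s =>
      ∑ r' : (∀ i : Fin k, ι i.succ),
        (∏ i : Fin k, N i.succ (s i) (r' i)) * x (Fin.cons a' r') with hw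
    have hinner : ∀ (a : ι 0) (r : ∀ i : Fin k, ι i.succ),
        (∑ q : (∀ i : Fin (k + 1), ι i), (∏ i, N i (Fin.cons a r i) (q i)) * x q)
          = ∑ a' : ι 0, N 0 a a' * w a' r := by
      intro a r
      rw [hsum]
      refine Finset.sum_congr rfl fun a' _ => ?_
      rw [hw, Finset.mul_sum]
      refine Finset.sum_congr rfl fun r' _ => ?_
      rw [Fin.prod_univ_succ]
      simp only [Fin.cons_zero, Fin.cons_succ]
      ring
    calc ∑ p : (∀ i : Fin (k + 1), ι i), (∑ q : (∀ i : Fin (k + 1), ι i), (∏ i, N i (p i) (q i)) * x q) ^ 2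
        = ∑ a : ι 0, ∑ r : (∀ i : Fin k, ι i.succ), (∑ a' : ι 0, N 0 a a' * w a' r) ^ 2 := by
          rw [hsum]
          exact Finset.sum_congr rfl fun a _ => Finset.sum_congr rfl fun r _ => by
            rw [hinner a r]
      _ = ∑ r : (∀ i : Fin k, ι i.succ), ∑ a : ι 0, (∑ a' : ι 0, N 0 a a' * w a' r) ^ 2 :=
          Finset.sum_comm
      _ ≤ (c 0) ^ 2 * ∑ r : (∀ i : Fin k, ι i.succ), ∑ a' : ι 0, (w a' r) ^ 2 :=
          key (N 0) (hN 0) w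
      _ = (c 0) ^ 2 * ∑ a' : ι 0, ∑ r : (∀ i : Fin k, ι i.succ), (w a' r) ^ 2 := by
          rw [Finset.sum_comm]
      _ ≤ (c 0) ^ 2 * ∑ a' : ι 0,
            ((∏ i : Fin k, c i.succ) ^ 2 * ∑ r' : (∀ i : Fin k, ι i.succ),
              (x (Fin.cons a' r')) ^ 2) := by
          apply mul_le_mul_of_nonneg_left _ (sq_nonneg _)
          apply Finset.sum_le_sum
          intro a' _
          exact ih (fun i => ι i.succ) (fun i => N i.succ) (fun i => c i.succ)
            (fun i => hc i.succ) (fun i => hN i.succ) (fun r' => x (Fin.cons a' r'))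
      _ = (∏ i, c i) ^ 2 * ∑ q : (∀ i : Fin (k + 1), ι i), (x q) ^ 2 := by
          rw [hsum fun q => (x q) ^ 2, Fin.prod_univ_succ, ← Finset.mul_sum]
          ring
lemma frob {I : Type*} [Fintype I] [DecidableEq I] (B : Matrix I I ℝ) :
    ∑ u, ∑ v, (B u v) ^ 2 ≤ opNorm B ^ 2 * (Fintype.card I : ℝ) := by
  rw [Finset.sum_comm]
  have hv : ∀ v : I, ∑ u, (B u v) ^ 2 ≤ opNorm B ^ 2 := by
    intro v
    have h := norm_form B (fun v' => if v' = v then 1 else 0)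
    simp only [mul_ite, mul_one, mul_zero, Finset.sum_ite_eq', Finset.mem_univ, if_true,
      ite_pow, one_pow, zero_pow, Finset.sum_ite_eq'] at h
    simpa using h
  calc ∑ v, ∑ u, (B u v) ^ 2 ≤ ∑ _v : I, opNorm B ^ 2 :=
        Finset.sum_le_sum fun v _ => hv v
    _ = opNorm B ^ 2 * (Fintype.card I : ℝ) := by
        rw [Finset.sum_const, nsmul_eq_mul, Finset.card_univ, mul_comm]

lemma quadform {J : Type*} [Fintype J] {c : ℝ} (hc : 0 ≤ c) (g x : J → ℝ)
    (hb : ∑ p, (g p) ^ 2 ≤ c ^ 2 * ∑ p, (x p) ^ 2) :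
    ∑ p, x p * g p ≤ c * ∑ p, (x p) ^ 2 := by
  have hx : (0:ℝ) ≤ ∑ p, (x p) ^ 2 := Finset.sum_nonneg fun _ _ => sq_nonneg _
  have h1 : (∑ p, x p * g p) ^ 2 ≤ (c * ∑ p, (x p) ^ 2) ^ 2 := by
    calc (∑ p, x p * g p) ^ 2 ≤ (∑ p, (x p) ^ 2) * ∑ p, (g p) ^ 2 :=
          Finset.sum_mul_sq_le_sq_mul_sq _ _ _
      _ ≤ (∑ p, (x p) ^ 2) * (c ^ 2 * ∑ p, (x p) ^ 2) :=
          mul_le_mul_of_nonneg_left hb hx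
      _ = (c * ∑ p, (x p) ^ 2) ^ 2 := by ring
  calc ∑ p, x p * g p ≤ |∑ p, x p * g p| := le_abs_self _
    _ = Real.sqrt ((∑ p, x p * g p) ^ 2) := (Real.sqrt_sq_eq_abs _).symm
    _ ≤ Real.sqrt ((c * ∑ p, (x p) ^ 2) ^ 2) := Real.sqrt_le_sqrt h1
    _ = |c * ∑ p, (x p) ^ 2| := Real.sqrt_sq_eq_abs _
    _ = c * ∑ p, (x p) ^ 2 := abs_of_nonneg (mul_nonneg hc hx)

def splitEquiv {k : ℕ} (d : Fin k → ℕ) :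
    (∀ i, Fin (d i) × Fin (d i)) ≃ ((∀ i, Fin (d i)) × (∀ i, Fin (d i))) where
  toFun p := (fun i => (p i).1, fun i => (p i).2)
  invFun uv i := (uv.1 i, uv.2 i)
  left_inv p := rfl
  right_inv uv := rfl

set_option maxHeartbeats 1000000 in
/-- with `II⁽ⁱ⁾_{uvu'v'} = σ⁽ⁱ⁾_{uu'}σ⁽ⁱ⁾_{vv'}` and
`III⁽ⁱ⁾_{uvu'v'} = σ⁽ⁱ⁾_{uv'}σ⁽ⁱ⁾_{u'v}`,
`Σ_{u,v,u',v'} (∏ᵢ (II⁽ⁱ⁾+III⁽ⁱ⁾)) b_{uv} b_{u'v'} ≤ 2^k C^{2k} ‖B‖² (∏ dᵢ)^{3/2}`. -/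
theorem stmt_10 (k : ℕ) (hk : 1 ≤ k) (d : Fin k → ℕ) (C : ℝ)
    (S : ∀ i : Fin k, Matrix (Fin (d i)) (Fin (d i)) ℝ)
    (hsym : ∀ i, (S i).IsSymm) (hC : ∀ i, opNorm (S i) ≤ C)
    (B : Matrix (∀ i, Fin (d i)) (∀ i, Fin (d i)) ℝ) :
    (∑ u, ∑ v, ∑ u', ∑ v',
        (∏ i : Fin k,
          (S i (u i) (u' i) * S i (v i) (v' i) + S i (u i) (v' i) * S i (u' i) (v i)))
          * B u v * B u' v')
      ≤ 2 ^ k * C ^ (2 * k) * opNorm B ^ 2 * (∏ i, (d i : ℝ)) ^ ((3 : ℝ) / 2) := by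
  classical
  have hC0 : 0 ≤ C := le_trans (opNorm_nonneg_s10 _) (hC ⟨0, hk⟩)
  set N : ∀ i : Fin k, Matrix (Fin (d i) × Fin (d i)) (Fin (d i) × Fin (d i)) ℝ :=
    fun i => Matrix.of fun p q => S i p.1 q.1 * S i p.2 q.2 + S i p.1 q.2 * S i q.1 p.2
    with hNdef
  have hN : ∀ i, opNorm (N i) ≤ 2 * C ^ 2 := fun i => opNorm_pair (S i) (hsym i) (hC i)
  set x : (∀ i, Fin (d i) × Fin (d i)) → ℝ :=
    fun p => B (fun i => (p i).1) (fun i => (p i).2) with hx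
  have h1 : ∀ f : (∀ i, Fin (d i)) → (∀ i, Fin (d i)) → ℝ,
      (∑ u, ∑ v, f u v)
        = ∑ p : (∀ i, Fin (d i) × Fin (d i)), f (fun i => (p i).1) (fun i => (p i).2) := by
    intro f
    calc ∑ u, ∑ v, f u v
        = ∑ uv : (∀ i, Fin (d i)) × (∀ i, Fin (d i)), f uv.1 uv.2 :=
          (Fintype.sum_prod_type (fun uv => f uv.1 uv.2)).symm
      _ = ∑ p : (∀ i, Fin (d i) × Fin (d i)), f (fun i => (p i).1) (fun i => (p i).2) :=
          (Equiv.sum_comp (splitEquiv d) (fun uv => f uv.1 uv.2)).symm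
  have step1 : (∑ u, ∑ v, ∑ u', ∑ v',
        (∏ i : Fin k,
          (S i (u i) (u' i) * S i (v i) (v' i) + S i (u i) (v' i) * S i (u' i) (v i)))
          * B u v * B u' v')
      = ∑ p : (∀ i, Fin (d i) × Fin (d i)), ∑ q : (∀ i, Fin (d i) × Fin (d i)),
          (∏ i, N i (p i) (q i)) * x p * x q := by
    rw [h1]
    refine Finset.sum_congr rfl fun p _ => ?_
    rw [h1]
    refine Finset.sum_congr rfl fun q _ => ?_
    simp only [hNdef, Matrix.of_apply, hx]
  have step2 : (∑ p : (∀ i, Fin (d i) × Fin (d i)), ∑ q : (∀ i, Fin (d i) × Fin (d i)),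
          (∏ i, N i (p i) (q i)) * x p * x q)
      = ∑ p : (∀ i, Fin (d i) × Fin (d i)),
          x p * ∑ q : (∀ i, Fin (d i) × Fin (d i)), (∏ i, N i (p i) (q i)) * x q := by
    refine Finset.sum_congr rfl fun p _ => ?_
    rw [Finset.mul_sum]
    exact Finset.sum_congr rfl fun q _ => by ring
  have hg := tensor_norm k (fun i => Fin (d i) × Fin (d i)) N (fun _ => 2 * C ^ 2)
    (fun _ => by positivity) hN x
  have step3 : (∑ p : (∀ i, Fin (d i) × Fin (d i)),
        x p * ∑ q : (∀ i, Fin (d i) × Fin (d i)), (∏ i, N i (p i) (q i)) * x q)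
      ≤ (∏ _i : Fin k, (2 * C ^ 2)) * ∑ p : (∀ i, Fin (d i) × Fin (d i)), (x p) ^ 2 :=
    quadform (Finset.prod_nonneg fun _ _ => by positivity) _ x hg
  have step4 : (∑ p : (∀ i, Fin (d i) × Fin (d i)), (x p) ^ 2) = ∑ u, ∑ v, (B u v) ^ 2 :=
    (h1 fun u v => (B u v) ^ 2).symm
  have hconst : (∏ _i : Fin k, (2 * C ^ 2)) = 2 ^ k * C ^ (2 * k) := by
    rw [Finset.prod_const, Finset.card_univ, Fintype.card_fin, mul_pow, ← pow_mul]
  have hcard : ((Fintype.card (∀ i, Fin (d i)) : ℕ) : ℝ) = ∏ i, (d i : ℝ) := by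
    rw [Fintype.card_pi]
    push_cast
    exact Finset.prod_congr rfl fun i _ => by rw [Fintype.card_fin]
  have hnn : (0:ℝ) ≤ 2 ^ k * C ^ (2 * k) :=
    mul_nonneg (by positivity) (pow_nonneg hC0 _)
  have hP : (∏ i, (d i : ℝ)) ≤ (∏ i, (d i : ℝ)) ^ ((3:ℝ)/2) := by
    have hcast : (∏ i, (d i : ℝ)) = ((∏ i, d i : ℕ) : ℝ) := by push_cast; rfl
    rcases Nat.eq_zero_or_pos (∏ i, d i) with h | h
    · rw [hcast, h]
      simp only [Nat.cast_zero]
      rw [Real.zero_rpow (by norm_num : ((3:ℝ)/2) ≠ 0)]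
    · have h1' : (1:ℝ) ≤ ∏ i, (d i : ℝ) := by rw [hcast]; exact_mod_cast h
      calc (∏ i, (d i:ℝ)) = (∏ i, (d i:ℝ)) ^ (1:ℝ) := (Real.rpow_one _).symm
        _ ≤ (∏ i, (d i:ℝ)) ^ ((3:ℝ)/2) :=
            Real.rpow_le_rpow_of_exponent_le h1' (by norm_num)
  calc (∑ u, ∑ v, ∑ u', ∑ v',
        (∏ i : Fin k,
          (S i (u i) (u' i) * S i (v i) (v' i) + S i (u i) (v' i) * S i (u' i) (v i)))
          * B u v * B u' v')
      = ∑ p : (∀ i, Fin (d i) × Fin (d i)), ∑ q : (∀ i, Fin (d i) × Fin (d i)),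
          (∏ i, N i (p i) (q i)) * x p * x q := step1
    _ = ∑ p : (∀ i, Fin (d i) × Fin (d i)),
          x p * ∑ q : (∀ i, Fin (d i) × Fin (d i)), (∏ i, N i (p i) (q i)) * x q := step2
    _ ≤ (∏ _i : Fin k, (2 * C ^ 2)) * ∑ p : (∀ i, Fin (d i) × Fin (d i)), (x p) ^ 2 := step3
    _ = 2 ^ k * C ^ (2 * k) * ∑ u, ∑ v, (B u v) ^ 2 := by rw [hconst, step4]
    _ ≤ 2 ^ k * C ^ (2 * k) * (opNorm B ^ 2 * (∏ i, (d i : ℝ))) := by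
        apply mul_le_mul_of_nonneg_left _ hnn
        rw [← hcard]
        exact frob B
    _ ≤ 2 ^ k * C ^ (2 * k) * (opNorm B ^ 2 * (∏ i, (d i : ℝ)) ^ ((3:ℝ)/2)) := by
        apply mul_le_mul_of_nonneg_left _ hnn
        exact mul_le_mul_of_nonneg_left hP (by positivity)
    _ = 2 ^ k * C ^ (2 * k) * opNorm B ^ 2 * (∏ i, (d i : ℝ)) ^ ((3:ℝ)/2) := by ring
end

section
/- Let k ≥ 1 and partition {1,…,k} into three disjoint sets S_II, S_III, S_IV with S_IV nonempty. Let Σ⁽ⁱ⁾ ∈ ℝ^{d_i×d_i} be real symmetric matrices with operator norms ‖Σ⁽ⁱ⁾‖ ≤ C for i ∈ S_II ∪ S_III, and for each q ∈ S_IV let K⁽q⁾ be a real array indexed by 4-tuples in [d_q]⁴ satisfying the symmetry K⁽q⁾_{u v u' v'} = K⁽q⁾_{u' v' u v} and the bound sup_{u,v ∈ [d_q]} Σ_{u',v' ∈ [d_q]} |K⁽q⁾_{u v u' v'}| ≤ κ₄. Let B be a real array indexed by pairs of multi-indices u, v ∈ [d₁]×⋯×[d_k], with operator norm ‖B‖.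 Then | Σ_{u,v,u',v'} ( ∏_{i∈S_II} σ⁽ⁱ⁾_{u_i u'_i} σ⁽ⁱ⁾_{v_i v'_i} ) ( ∏_{j∈S_III} σ⁽ʲ⁾_{u_j v'_j} σ⁽ʲ⁾_{u'_j v_j} ) ( ∏_{q∈S_IV} K⁽q⁾_{u_q v_q u'_q v'_q} ) b_{uv} b_{u'v'} | ≤ κ₄^{|S_IV|} C^{2(k−|S_IV|)} ‖B‖² (∏_{i=1}^k d_i) ∏_{i ∈ S_II ∪ S_III} d_i, where the sum runs over all multi-indices u, v, u', v' ∈ [d₁]×⋯×[d_k]. -/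
lemma col_sq_sum_le {I : Type*} [Fintype I] [DecidableEq I] (A : Matrix I I ℝ) (j : I) :
    (∑ i, (A i j) ^ 2) ≤ opNorm A ^ 2 := by
  classical
  have hy : ∀ i, ((LinearMap.toContinuousLinearMap (Matrix.toEuclideanLin A))
      (EuclideanSpace.single j (1:ℝ))) i = A i j := by
    intro i
    show (Matrix.toEuclideanLin A) (EuclideanSpace.single j (1:ℝ)) i = A i j
    rw [Matrix.toEuclideanLin_apply]
    simp [Matrix.mulVec, dotProduct, EuclideanSpace.single_apply]
  have hnorm : ‖(LinearMap.toContinuousLinearMap (Matrix.toEuclideanLin A))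
      (EuclideanSpace.single j (1:ℝ))‖ ^ 2 = ∑ i, (A i j) ^ 2 := by
    rw [EuclideanSpace.norm_eq, Real.sq_sqrt (by positivity)]
    exact Finset.sum_congr rfl fun i _ => by rw [hy, Real.norm_eq_abs, sq_abs]
  have hle : ‖(LinearMap.toContinuousLinearMap (Matrix.toEuclideanLin A))
      (EuclideanSpace.single j (1:ℝ))‖ ≤ opNorm A := by
    have h := ContinuousLinearMap.le_opNorm
      (LinearMap.toContinuousLinearMap (Matrix.toEuclideanLin A))
      (EuclideanSpace.single j (1:ℝ))
    rwa [EuclideanSpace.norm_single, norm_one, mul_one] at h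
  calc (∑ i, (A i j) ^ 2)
      = ‖(LinearMap.toContinuousLinearMap (Matrix.toEuclideanLin A))
          (EuclideanSpace.single j (1:ℝ))‖ ^ 2 := hnorm.symm
  _ ≤ opNorm A ^ 2 := by
      have h2 := norm_nonneg ((LinearMap.toContinuousLinearMap (Matrix.toEuclideanLin A))
        (EuclideanSpace.single j (1:ℝ)))
      nlinarith

lemma col_abs_sum_le {I : Type*} [Fintype I] [DecidableEq I] (A : Matrix I I ℝ) (j : I) :
    (∑ i, |A i j|) ≤ Real.sqrt (Fintype.card I) * opNorm A := by
  have h0 : (0:ℝ) ≤ opNorm A := norm_nonneg _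
  have h1 : (∑ i, |A i j|) ^ 2 ≤ (Fintype.card I : ℝ) * opNorm A ^ 2 := by
    have h := Finset.sum_mul_sq_le_sq_mul_sq Finset.univ (fun _ : I => (1:ℝ))
      (fun i => |A i j|)
    simp only [one_mul, one_pow, sq_abs] at h
    calc (∑ i, |A i j|) ^ 2 ≤ (∑ _i : I, (1:ℝ)) * ∑ i, (A i j) ^ 2 := h
    _ = (Fintype.card I : ℝ) * ∑ i, (A i j) ^ 2 := by simp [Finset.card_univ]
    _ ≤ (Fintype.card I : ℝ) * opNorm A ^ 2 :=
        mul_le_mul_of_nonneg_left (col_sq_sum_le A j) (by positivity)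
  calc (∑ i, |A i j|) = Real.sqrt ((∑ i, |A i j|) ^ 2) := (Real.sqrt_sq (by positivity)).symm
  _ ≤ Real.sqrt ((Fintype.card I : ℝ) * opNorm A ^ 2) := Real.sqrt_le_sqrt h1
  _ = Real.sqrt (Fintype.card I) * opNorm A := by
      rw [Real.sqrt_mul (by positivity), Real.sqrt_sq h0]

lemma sum_prod_pi {ι : Type*} [Fintype ι] [DecidableEq ι] {κ : ι → Type*}
    [∀ i, Fintype (κ i)] (g : ∀ i, κ i → ℝ) :
    (∑ u : ∀ i, κ i, ∏ i, g i (u i)) = ∏ i, ∑ a, g i a := by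
  have h := Finset.prod_univ_sum (fun _ : ι => (Finset.univ : Finset _)) g
  rw [Fintype.piFinset_univ] at h
  exact h.symm

lemma schur_bound {X : Type*} [Fintype X] (W : X → X → ℝ) (f : X → ℝ) (R : ℝ)
    (hW0 : ∀ x y, 0 ≤ W x y) (hsymW : ∀ x y, W x y = W y x)
    (hrow : ∀ x, (∑ y, W x y) ≤ R) :
    (∑ x, ∑ y, W x y * (|f x| * |f y|)) ≤ R * ∑ x, f x ^ 2 := by
  have key : (∑ x, ∑ y, W x y * (|f x| * |f y|)) ≤ ∑ x, ∑ y, W x y * f x ^ 2 := by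
    have h3 : (∑ x, ∑ y, W x y * f y ^ 2) = ∑ x, ∑ y, W x y * f x ^ 2 := by
      calc (∑ x, ∑ y, W x y * f y ^ 2) = ∑ x, ∑ y, W y x * f x ^ 2 := Finset.sum_comm
      _ = ∑ x, ∑ y, W x y * f x ^ 2 :=
          Finset.sum_congr rfl fun x _ => Finset.sum_congr rfl fun y _ => by rw [hsymW]
    calc (∑ x, ∑ y, W x y * (|f x| * |f y|))
        ≤ ∑ x, ∑ y, (W x y * f x ^ 2 + W x y * f y ^ 2) / 2 := by
          refine Finset.sum_le_sum fun x _ => Finset.sum_le_sum fun y _ => ?_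
          have h : |f x| * |f y| ≤ (f x ^ 2 + f y ^ 2) / 2 := by
            nlinarith [sq_nonneg (|f x| - |f y|), sq_abs (f x), sq_abs (f y)]
          calc W x y * (|f x| * |f y|) ≤ W x y * ((f x ^ 2 + f y ^ 2) / 2) :=
                mul_le_mul_of_nonneg_left h (hW0 x y)
          _ = (W x y * f x ^ 2 + W x y * f y ^ 2) / 2 := by ring
    _ = ((∑ x, ∑ y, W x y * f x ^ 2) + (∑ x, ∑ y, W x y * f y ^ 2)) / 2 := by
        simp only [← Finset.sum_div, Finset.sum_add_distrib]
    _ = ∑ x, ∑ y, W x y * f x ^ 2 := by rw [h3]; ring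
  refine key.trans ?_
  calc (∑ x, ∑ y, W x y * f x ^ 2) = ∑ x, f x ^ 2 * ∑ y, W x y := by
        refine Finset.sum_congr rfl fun x _ => ?_
        rw [Finset.mul_sum]
        exact Finset.sum_congr rfl fun y _ => mul_comm _ _
  _ ≤ ∑ x, f x ^ 2 * R :=
      Finset.sum_le_sum fun x _ => mul_le_mul_of_nonneg_left (hrow x) (sq_nonneg _)
  _ = R * ∑ x, f x ^ 2 := by rw [← Finset.sum_mul]; ring

set_option maxHeartbeats 2000000

/-- bound on a contraction mixing `II`/`III` covariance factors (for the
indices in `SII`, `SIII`) and abstract fourth-cumulant kernels `K⁽q⁾` (for indices in the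
nonempty set `SIV`):
`|Σ_{u,v,u',v'} (∏ ...) b_{uv}b_{u'v'}|
   ≤ κ₄^{|S_IV|} C^{2(k−|S_IV|)} ‖B‖² (∏ᵢ dᵢ) ∏_{i∈S_II∪S_III} dᵢ`. -/
theorem stmt_11 (k : ℕ) (hk : 1 ≤ k) (d : Fin k → ℕ) (C κ₄ : ℝ)
    (SII SIII SIV : Finset (Fin k))
    (hdisj₁ : Disjoint SII SIII) (hdisj₂ : Disjoint SII SIV) (hdisj₃ : Disjoint SIII SIV)
    (hcover : SII ∪ SIII ∪ SIV = Finset.univ) (hSIV : SIV.Nonempty)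
    (S : ∀ i : Fin k, Matrix (Fin (d i)) (Fin (d i)) ℝ)
    (hsym : ∀ i ∈ SII ∪ SIII, (S i).IsSymm)
    (hC : ∀ i ∈ SII ∪ SIII, opNorm (S i) ≤ C)
    (K : ∀ i : Fin k, Fin (d i) → Fin (d i) → Fin (d i) → Fin (d i) → ℝ)
    (hKsym : ∀ q ∈ SIV, ∀ u v u' v', K q u v u' v' = K q u' v' u v)
    (hK : ∀ q ∈ SIV, ∀ u v, (∑ u', ∑ v', |K q u v u' v'|) ≤ κ₄)
    (B : Matrix (∀ i, Fin (d i)) (∀ i, Fin (d i)) ℝ) :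
    |(∑ u, ∑ v, ∑ u', ∑ v',
        ((∏ i ∈ SII, S i (u i) (u' i) * S i (v i) (v' i)) *
         (∏ j ∈ SIII, S j (u j) (v' j) * S j (u' j) (v j)) *
         (∏ q ∈ SIV, K q (u q) (v q) (u' q) (v' q))) * B u v * B u' v')|
      ≤ κ₄ ^ SIV.card * C ^ (2 * (k - SIV.card)) * opNorm B ^ 2 *
        (∏ i, (d i : ℝ)) * ∏ i ∈ SII ∪ SIII, (d i : ℝ) := by
  classical
  by_cases hd : ∀ i, 0 < d i
  · -- all dimensions positive
    obtain ⟨q0, hq0⟩ := hSIV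
    have hκ : (0:ℝ) ≤ κ₄ :=
      le_trans (by positivity) (hK q0 hq0 ⟨0, hd q0⟩ ⟨0, hd q0⟩)
    have hRIV : Disjoint (SII ∪ SIII) SIV :=
      Finset.disjoint_union_left.mpr ⟨hdisj₂, hdisj₃⟩
    have hcardR : (SII ∪ SIII).card = k - SIV.card := by
      have h1 : ((SII ∪ SIII) ∪ SIV).card = (SII ∪ SIII).card + SIV.card :=
        Finset.card_union_of_disjoint hRIV
      rw [hcover] at h1
      have h2 : (Finset.univ : Finset (Fin k)).card = k := by simp
      omega
    set W : (∀ i, Fin (d i)) → (∀ i, Fin (d i)) → (∀ i, Fin (d i)) → (∀ i, Fin (d i)) → ℝ :=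
      fun u v u' v' =>
        (∏ i ∈ SII, |S i (u i) (u' i)| * |S i (v i) (v' i)|) *
        (∏ j ∈ SIII, |S j (u j) (v' j)| * |S j (u' j) (v j)|) *
        (∏ q ∈ SIV, |K q (u q) (v q) (u' q) (v' q)|) with hWdef
    have hW0 : ∀ u v u' v', 0 ≤ W u v u' v' := by
      intro u v u' v'
      simp only [hWdef]
      refine mul_nonneg (mul_nonneg ?_ ?_) ?_ <;>
        exact Finset.prod_nonneg fun i _ => by positivity
    have hWsym : ∀ u v u' v', W u v u' v' = W u' v' u v := by
      intro u v u' v'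
      simp only [hWdef]
      congr 1
      · congr 1
        · refine Finset.prod_congr rfl fun i hi => ?_
          rw [show S i (u' i) (u i) = S i (u i) (u' i) from
                (hsym i (Finset.mem_union_left _ hi)).apply _ _,
              show S i (v' i) (v i) = S i (v i) (v' i) from
                (hsym i (Finset.mem_union_left _ hi)).apply _ _]
        · exact Finset.prod_congr rfl fun j _ => mul_comm _ _
      · exact Finset.prod_congr rfl fun q hq => by rw [hKsym q hq]
    have habs : ∀ u v u' v',
        |((∏ i ∈ SII, S i (u i) (u' i) * S i (v i) (v' i)) *
          (∏ j ∈ SIII, S j (u j) (v' j) * S j (u' j) (v j)) *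
          (∏ q ∈ SIV, K q (u q) (v q) (u' q) (v' q))) * B u v * B u' v'|
        = W u v u' v' * (|B u v| * |B u' v'|) := by
      intro u v u' v'
      simp only [hWdef, abs_mul, Finset.abs_prod]
      ring
    -- row-sum bound
    have hrow : ∀ u v : (∀ i, Fin (d i)),
        (∑ u', ∑ v', W u v u' v') ≤
          (∏ i ∈ SII ∪ SIII, (d i : ℝ)) * C ^ (2 * (k - SIV.card)) * κ₄ ^ SIV.card := by
      intro u v
      set g : ∀ i : Fin k, Fin (d i) → Fin (d i) → ℝ := fun i a b =>
        if i ∈ SII then |S i (u i) a| * |S i (v i) b|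
        else if i ∈ SIII then |S i (u i) b| * |S i a (v i)|
        else |K i (u i) (v i) a b| with hgdef
      have hg0 : ∀ i a b, 0 ≤ g i a b := by
        intro i a b
        simp only [hgdef]
        split_ifs <;> positivity
      have hgs0 : ∀ i : Fin k, 0 ≤ ∑ a, ∑ b, g i a b :=
        fun i => Finset.sum_nonneg fun a _ => Finset.sum_nonneg fun b _ => hg0 i a b
      have hWg : ∀ u' v', W u v u' v' = ∏ i, g i (u' i) (v' i) := by
        intro u' v'
        rw [show (Finset.univ : Finset (Fin k)) = (SII ∪ SIII) ∪ SIV from hcover.symm,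
            Finset.prod_union hRIV, Finset.prod_union hdisj₁]
        simp only [hWdef]
        congr 1
        · congr 1
          · refine Finset.prod_congr rfl fun i hi => ?_
            simp only [hgdef]
            rw [if_pos hi]
          · refine Finset.prod_congr rfl fun j hj => ?_
            have hn : j ∉ SII := Finset.disjoint_right.mp hdisj₁ hj
            simp only [hgdef]
            rw [if_neg hn, if_pos hj]
        · refine Finset.prod_congr rfl fun q hq => ?_
          have hn2 : q ∉ SII := Finset.disjoint_right.mp hdisj₂ hq
          have hn3 : q ∉ SIII := Finset.disjoint_right.mp hdisj₃ hq
          simp only [hgdef]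
          rw [if_neg hn2, if_neg hn3]
      have hsum : (∑ u', ∑ v', W u v u' v') = ∏ i, ∑ a, ∑ b, g i a b := by
        calc (∑ u', ∑ v', W u v u' v')
            = ∑ u' : (∀ i, Fin (d i)), ∏ i, ∑ b, g i (u' i) b := by
              refine Finset.sum_congr rfl fun u' _ => ?_
              calc (∑ v', W u v u' v')
                  = ∑ v' : (∀ i, Fin (d i)), ∏ i, g i (u' i) (v' i) :=
                    Finset.sum_congr rfl fun v' _ => hWg u' v'
              _ = ∏ i, ∑ b, g i (u' i) b := sum_prod_pi (fun i b => g i (u' i) b)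
        _ = ∏ i, ∑ a, ∑ b, g i a b := sum_prod_pi (fun i a => ∑ b, g i a b)
      rw [hsum, show (Finset.univ : Finset (Fin k)) = (SII ∪ SIII) ∪ SIV from hcover.symm,
          Finset.prod_union hRIV]
      have hA : (∏ i ∈ SII ∪ SIII, ∑ a, ∑ b, g i a b)
          ≤ ∏ i ∈ SII ∪ SIII, ((d i : ℝ) * C ^ 2) := by
        refine Finset.prod_le_prod (fun i _ => hgs0 i) (fun i hi => ?_)
        have hC0 : (0:ℝ) ≤ C := le_trans (norm_nonneg _) (hC i hi)
        have hcol : ∀ c : Fin (d i), (∑ a, |S i a c|) ≤ Real.sqrt (d i) * C := by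
          intro c
          have h := col_abs_sum_le (S i) c
          rw [Fintype.card_fin] at h
          exact h.trans (mul_le_mul_of_nonneg_left (hC i hi) (Real.sqrt_nonneg _))
        have hrowS : ∀ r : Fin (d i), (∑ a, |S i r a|) ≤ Real.sqrt (d i) * C := by
          intro r
          have he : (∑ a, |S i r a|) = ∑ a, |S i a r| := by
            refine Finset.sum_congr rfl fun a _ => ?_
            rw [show S i r a = S i a r from (hsym i hi).apply a r]
          rw [he]; exact hcol r
        rcases Finset.mem_union.mp hi with h2 | h3
        · have he : (∑ a, ∑ b, g i a b) = (∑ a, |S i (u i) a|) * (∑ b, |S i (v i) b|) := by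
            rw [Finset.sum_mul_sum]
            refine Finset.sum_congr rfl fun a _ => Finset.sum_congr rfl fun b _ => ?_
            simp only [hgdef]
            rw [if_pos h2]
          rw [he]
          calc (∑ a, |S i (u i) a|) * (∑ b, |S i (v i) b|)
              ≤ (Real.sqrt (d i) * C) * (Real.sqrt (d i) * C) :=
                mul_le_mul (hrowS _) (hrowS _) (by positivity) (by positivity)
          _ = (d i : ℝ) * C ^ 2 := by
              rw [mul_mul_mul_comm, Real.mul_self_sqrt (by positivity)]; ring
        · have hn : i ∉ SII := Finset.disjoint_right.mp hdisj₁ h3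
          have he : (∑ a, ∑ b, g i a b) = (∑ a, |S i a (v i)|) * (∑ b, |S i (u i) b|) := by
            rw [Finset.sum_mul_sum]
            refine Finset.sum_congr rfl fun a _ => Finset.sum_congr rfl fun b _ => ?_
            simp only [hgdef]
            rw [if_neg hn, if_pos h3]
            ring
          rw [he]
          calc (∑ a, |S i a (v i)|) * (∑ b, |S i (u i) b|)
              ≤ (Real.sqrt (d i) * C) * (Real.sqrt (d i) * C) :=
                mul_le_mul (hcol _) (hrowS _) (by positivity) (by positivity)
          _ = (d i : ℝ) * C ^ 2 := by
              rw [mul_mul_mul_comm, Real.mul_self_sqrt (by positivity)]; ring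
      have hB : (∏ q ∈ SIV, ∑ a, ∑ b, g q a b) ≤ κ₄ ^ SIV.card := by
        calc (∏ q ∈ SIV, ∑ a, ∑ b, g q a b) ≤ ∏ _q ∈ SIV, κ₄ := by
              refine Finset.prod_le_prod (fun q _ => hgs0 q) (fun q hq => ?_)
              have hn2 : q ∉ SII := Finset.disjoint_right.mp hdisj₂ hq
              have hn3 : q ∉ SIII := Finset.disjoint_right.mp hdisj₃ hq
              have he : (∑ a, ∑ b, g q a b) = ∑ a, ∑ b, |K q (u q) (v q) a b| := by
                refine Finset.sum_congr rfl fun a _ => Finset.sum_congr rfl fun b _ => ?_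
                simp only [hgdef]
                rw [if_neg hn2, if_neg hn3]
              rw [he]; exact hK q hq (u q) (v q)
        _ = κ₄ ^ SIV.card := Finset.prod_const _
      calc (∏ i ∈ SII ∪ SIII, ∑ a, ∑ b, g i a b) * (∏ q ∈ SIV, ∑ a, ∑ b, g q a b)
          ≤ (∏ i ∈ SII ∪ SIII, ((d i : ℝ) * C ^ 2)) * κ₄ ^ SIV.card :=
            mul_le_mul hA hB (Finset.prod_nonneg fun q _ => hgs0 q)
              (Finset.prod_nonneg fun i _ => by positivity)
      _ = (∏ i ∈ SII ∪ SIII, (d i : ℝ)) * C ^ (2 * (k - SIV.card)) * κ₄ ^ SIV.card := by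
          rw [Finset.prod_mul_distrib, Finset.prod_const, hcardR, ← pow_mul]
    -- assemble
    have hstep1 : |(∑ u, ∑ v, ∑ u', ∑ v',
        ((∏ i ∈ SII, S i (u i) (u' i) * S i (v i) (v' i)) *
         (∏ j ∈ SIII, S j (u j) (v' j) * S j (u' j) (v j)) *
         (∏ q ∈ SIV, K q (u q) (v q) (u' q) (v' q))) * B u v * B u' v')|
        ≤ ∑ x : (∀ i, Fin (d i)) × (∀ i, Fin (d i)),
            ∑ y : (∀ i, Fin (d i)) × (∀ i, Fin (d i)),
              W x.1 x.2 y.1 y.2 * (|B x.1 x.2| * |B y.1 y.2|) := by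
      have hre : (∑ x : (∀ i, Fin (d i)) × (∀ i, Fin (d i)),
            ∑ y : (∀ i, Fin (d i)) × (∀ i, Fin (d i)),
              W x.1 x.2 y.1 y.2 * (|B x.1 x.2| * |B y.1 y.2|))
          = ∑ u, ∑ v, ∑ u', ∑ v', W u v u' v' * (|B u v| * |B u' v'|) := by
        rw [Fintype.sum_prod_type]
        exact Finset.sum_congr rfl fun u _ => Finset.sum_congr rfl fun v _ =>
          Fintype.sum_prod_type _
      rw [hre]
      refine (Finset.abs_sum_le_sum_abs _ _).trans (Finset.sum_le_sum fun u _ => ?_)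
      refine (Finset.abs_sum_le_sum_abs _ _).trans (Finset.sum_le_sum fun v _ => ?_)
      refine (Finset.abs_sum_le_sum_abs _ _).trans (Finset.sum_le_sum fun u' _ => ?_)
      refine (Finset.abs_sum_le_sum_abs _ _).trans (Finset.sum_le_sum fun v' _ => ?_)
      exact le_of_eq (habs u v u' v')
    have hschur := schur_bound
      (fun x y : (∀ i, Fin (d i)) × (∀ i, Fin (d i)) => W x.1 x.2 y.1 y.2)
      (fun x : (∀ i, Fin (d i)) × (∀ i, Fin (d i)) => B x.1 x.2)
      ((∏ i ∈ SII ∪ SIII, (d i : ℝ)) * C ^ (2 * (k - SIV.card)) * κ₄ ^ SIV.card)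
      (fun x y => hW0 _ _ _ _) (fun x y => hWsym _ _ _ _)
      (fun x => by
        calc (∑ y : (∀ i, Fin (d i)) × (∀ i, Fin (d i)), W x.1 x.2 y.1 y.2)
            = ∑ u', ∑ v', W x.1 x.2 u' v' := Fintype.sum_prod_type _
        _ ≤ _ := hrow x.1 x.2)
    have hfrob : (∑ x : (∀ i, Fin (d i)) × (∀ i, Fin (d i)), (B x.1 x.2) ^ 2)
        ≤ (∏ i, (d i : ℝ)) * opNorm B ^ 2 := by
      calc (∑ x : (∀ i, Fin (d i)) × (∀ i, Fin (d i)), (B x.1 x.2) ^ 2)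
          = ∑ u, ∑ v, (B u v) ^ 2 := Fintype.sum_prod_type _
      _ = ∑ v, ∑ u, (B u v) ^ 2 := Finset.sum_comm
      _ ≤ ∑ _v : (∀ i, Fin (d i)), opNorm B ^ 2 :=
          Finset.sum_le_sum fun v _ => col_sq_sum_le B v
      _ = (Fintype.card (∀ i, Fin (d i)) : ℝ) * opNorm B ^ 2 := by
          rw [Finset.sum_const, Finset.card_univ, nsmul_eq_mul]
      _ = (∏ i, (d i : ℝ)) * opNorm B ^ 2 := by
          rw [Fintype.card_pi]
          push_cast [Fintype.card_fin]
          ring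
    have hCpow : (0:ℝ) ≤ C ^ (2 * (k - SIV.card)) := by
      rw [pow_mul]
      exact pow_nonneg (sq_nonneg C) _
    have hR0 : (0:ℝ) ≤ (∏ i ∈ SII ∪ SIII, (d i : ℝ)) * C ^ (2 * (k - SIV.card)) * κ₄ ^ SIV.card :=
      mul_nonneg (mul_nonneg (Finset.prod_nonneg fun i _ => by positivity) hCpow)
        (pow_nonneg hκ _)
    refine hstep1.trans (hschur.trans ?_)
    refine (mul_le_mul_of_nonneg_left hfrob hR0).trans (le_of_eq ?_)
    ring
  · -- some dimension is zero
    push_neg at hd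
    obtain ⟨i0, hi0⟩ := hd
    have hdi0 : d i0 = 0 := by omega
    haveI hF : IsEmpty (Fin (d i0)) := ⟨fun x => absurd x.2 (by omega)⟩
    haveI hPi : IsEmpty (∀ i, Fin (d i)) := ⟨fun u => hF.false (u i0)⟩
    have hz : (∏ i, (d i : ℝ)) = 0 :=
      Finset.prod_eq_zero (Finset.mem_univ i0) (by rw [hdi0]; norm_num)
    rw [hz]
    simp only [Finset.univ_eq_empty, Finset.sum_empty, abs_zero, mul_zero, zero_mul, le_refl]
end

section
/- Let k ≥ 1, let Σ⁽ⁱ⁾ ∈ ℝ^{d_i×d_i} be real symmetric matrices with ‖Σ⁽ⁱ⁾‖ ≤ C, and for each i let K⁽ⁱ⁾ be a real array on [d_i]⁴ with K⁽ⁱ⁾_{uvu'v'} = K⁽ⁱ⁾_{u'v'uv} and sup_{u,v} Σ_{u',v'} |K⁽ⁱ⁾_{uvu'v'}| ≤ κ₄, where κ₄ > 0. Write II⁽ⁱ⁾_{uvu'v'} = σ⁽ⁱ⁾_{uu'} σ⁽ⁱ⁾_{vv'}, III⁽ⁱ⁾_{uvu'v'} = σ⁽ⁱ⁾_{uv'}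 σ⁽ⁱ⁾_{u'v}, IV⁽ⁱ⁾_{uvu'v'} = K⁽ⁱ⁾_{uvu'v'}. Then for every real array B indexed by pairs of multi-indices in [d₁]×⋯×[d_k] with operator norm ‖B‖: Σ_{u,v,u',v'} ( ∏_{i=1}^{k} ( II⁽ⁱ⁾ + III⁽ⁱ⁾ + IV⁽ⁱ⁾ )_{u_i v_i u'_i v'_i} ) b_{uv} b_{u'v'} ≤ 2^k C^{2k} ‖B‖² (∏_i d_i)^{3/2} + (3^k − 2^k) κ₄^k ‖B‖² · max_{0 ≤ ℓ ≤ k−1} max_{1 ≤ i_1 < ⋯ < i_ℓ ≤ k} (C²/κ₄)^ℓ (∏_i d_i) ∏_{j=1}^ℓ d_{i_j}, where the outer sum runs over all multi-indices u, v, u', v' ∈ [d₁]×⋯×[d_k]. -/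
open Finset

/-- The sign condition makes the squared inequality equivalent to `‖M x‖ ≤ c ‖x‖`. -/
def L2OpNormLE {P : Type*} [Fintype P] (M : P → P → ℝ) (c : ℝ) : Prop :=
  0 ≤ c ∧ ∀ x : P → ℝ, ∑ p, (∑ q, M p q * x q) ^ 2 ≤ c ^ 2 * ∑ q, x q ^ 2

namespace L2OpNormLE

variable {P Q : Type*} [Fintype P] [Fintype Q] {M : P → P → ℝ} {c : ℝ}

theorem mono (h : L2OpNormLE M c) {c' : ℝ} (hc : c ≤ c') : L2OpNormLE M c' := by
  refine ⟨h.1.trans hc, fun x => (h.2 x).trans ?_⟩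
  gcongr
  exact h.1

theorem reindex (h : L2OpNormLE M c) (e e' : Q ≃ P) :
    L2OpNormLE (fun p q => M (e p) (e' q)) c := by
  refine ⟨h.1, fun x => ?_⟩
  have hcol : ∀ p, ∑ q, M p (e' q) * x q = ∑ r, M p r * x (e'.symm r) := fun p => by
    rw [← e'.sum_comp]; simp only [Equiv.symm_apply_apply]
  calc ∑ p, (∑ q, M (e p) (e' q) * x q) ^ 2 = ∑ p, (∑ r, M p r * x (e'.symm r)) ^ 2 := by
        simp only [hcol]; exact e.sum_comp fun p => (∑ r, M p r * x (e'.symm r)) ^ 2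
    _ ≤ c ^ 2 * ∑ r, x (e'.symm r) ^ 2 := h.2 _
    _ = c ^ 2 * ∑ q, x q ^ 2 := by rw [e'.symm.sum_comp fun q => x q ^ 2]

theorem kron {N : Q → Q → ℝ} {b : ℝ} (hM : L2OpNormLE M c) (hN : L2OpNormLE N b) :
    L2OpNormLE (fun p q : P × Q => M p.1 q.1 * N p.2 q.2) (c * b) := by
  refine ⟨mul_nonneg hM.1 hN.1, fun x => ?_⟩
  set y : Q → P → ℝ := fun p₂ r₁ => ∑ r₂, N p₂ r₂ * x (r₁, r₂)
  have hsplit : ∀ p : P × Q,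
      ∑ q : P × Q, M p.1 q.1 * N p.2 q.2 * x q = ∑ r₁, M p.1 r₁ * y p.2 r₁ := fun p => by
    simp only [y, Fintype.sum_prod_type, Finset.mul_sum, mul_assoc]
  calc ∑ p : P × Q, (∑ q : P × Q, M p.1 q.1 * N p.2 q.2 * x q) ^ 2
      = ∑ p₂, ∑ p₁, (∑ r₁, M p₁ r₁ * y p₂ r₁) ^ 2 := by
        simp only [hsplit]; rw [Fintype.sum_prod_type, Finset.sum_comm]
    _ ≤ ∑ p₂, c ^ 2 * ∑ r₁, y p₂ r₁ ^ 2 := sum_le_sum fun p₂ _ => hM.2 (y p₂)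
    _ = c ^ 2 * ∑ r₁, ∑ p₂, (∑ r₂, N p₂ r₂ * x (r₁, r₂)) ^ 2 := by
        rw [← Finset.mul_sum, Finset.sum_comm]
    _ ≤ c ^ 2 * ∑ r₁, b ^ 2 * ∑ r₂, x (r₁, r₂) ^ 2 := by
        gcongr with r₁
        exact hN.2 fun r₂ => x (r₁, r₂)
    _ = (c * b) ^ 2 * ∑ q : P × Q, x q ^ 2 := by
        rw [← Finset.mul_sum, Fintype.sum_prod_type]; ring

theorem pi {n : ℕ} {α : Fin n → Type*} [∀ i, Fintype (α i)] {M : ∀ i, α i → α i → ℝ}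
    {c : Fin n → ℝ} (h : ∀ i, L2OpNormLE (M i) (c i)) :
    L2OpNormLE (fun y z : ∀ i, α i => ∏ i, M i (y i) (z i)) (∏ i, c i) := by
  induction n with
  | zero => exact ⟨by simp, fun x => by simp⟩
  | succ n ih =>
    have hcons := ((h 0).kron (ih fun i => h i.succ)).reindex
      (Fin.consEquiv α).symm (Fin.consEquiv α).symm
    simp only [Fin.prod_univ_succ]
    convert hcons using 3 with y z
    simp [Fin.tail]

theorem sum_sq_le [DecidableEq P] (h : L2OpNormLE M c) (q : P) : ∑ p, M p q ^ 2 ≤ c ^ 2 := by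
  simpa [Pi.single_apply] using h.2 (Pi.single q 1)

theorem sum_sum_mul_mul_le (h : L2OpNormLE M c) (x : P → ℝ) :
    ∑ p, ∑ q, M p q * x p * x q ≤ c * ∑ p, x p ^ 2 := by
  have hx : 0 ≤ ∑ p, x p ^ 2 := sum_nonneg fun p _ => sq_nonneg _
  have hcs := sum_mul_sq_le_sq_mul_sq univ x fun p => ∑ q, M p q * x q
  have hsq : (∑ p, x p * ∑ q, M p q * x q) ^ 2 ≤ (c * ∑ p, x p ^ 2) ^ 2 :=
    hcs.trans <| (mul_le_mul_of_nonneg_left (h.2 x) hx).trans_eq (by ring)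
  calc ∑ p, ∑ q, M p q * x p * x q = ∑ p, x p * ∑ q, M p q * x q := by
        refine sum_congr rfl fun p _ => ?_
        rw [Finset.mul_sum]
        exact sum_congr rfl fun q _ => by ring
    _ ≤ c * ∑ p, x p ^ 2 := (abs_le_of_sq_le_sq hsq (mul_nonneg h.1 hx)).trans' (le_abs_self _)

end L2OpNormLE

theorem l2OpNormLE_of_sum_abs_le {P : Type*} [Fintype P] {M : P → P → ℝ} {c : ℝ} (hc : 0 ≤ c)
    (hsymm : ∀ p q, M p q = M q p) (hrow : ∀ p, ∑ q, |M p q| ≤ c) : L2OpNormLE M c := by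
  refine ⟨hc, fun x => ?_⟩
  have hrow_cs : ∀ p, (∑ q, M p q * x q) ^ 2 ≤ (∑ q, |M p q|) * ∑ q, |M p q| * x q ^ 2 :=
    fun p => sum_sq_le_sum_mul_sum_of_sq_le_mul univ (fun q _ => abs_nonneg _)
      (fun q _ => by positivity) fun q _ => le_of_eq <| by rw [mul_pow, ← sq_abs (M p q)]; ring
  calc ∑ p, (∑ q, M p q * x q) ^ 2 ≤ ∑ p, c * ∑ q, |M p q| * x q ^ 2 :=
        sum_le_sum fun p _ => (hrow_cs p).trans <|
          mul_le_mul_of_nonneg_right (hrow p) (sum_nonneg fun q _ => by positivity)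
    _ = c * ∑ q, (∑ p, |M q p|) * x q ^ 2 := by
        rw [← Finset.mul_sum, Finset.sum_comm]
        simp only [Finset.sum_mul, hsymm]
    _ ≤ c * ∑ q, c * x q ^ 2 := by
        gcongr with q
        exact hrow q
    _ = c ^ 2 * ∑ q, x q ^ 2 := by rw [← Finset.mul_sum]; ring

theorem l2OpNormLE_opNorm {P : Type*} [Fintype P] [DecidableEq P] (A : Matrix P P ℝ) :
    L2OpNormLE A (opNorm A) := by
  refine ⟨norm_nonneg _, fun x => ?_⟩
  have h := (LinearMap.toContinuousLinearMap (Matrix.toEuclideanLin A)).le_opNorm (WithLp.toLp 2 x)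
  have h2 := pow_le_pow_left₀ (norm_nonneg _) h 2
  rw [mul_pow, EuclideanSpace.norm_sq_eq, EuclideanSpace.norm_sq_eq] at h2
  simpa [Matrix.mulVec, dotProduct, opNorm] using h2

theorem sum_sum_sq_le_opNorm_sq_mul_card {P : Type*} [Fintype P] [DecidableEq P]
    (B : Matrix P P ℝ) : ∑ u, ∑ v, B u v ^ 2 ≤ opNorm B ^ 2 * Fintype.card P := by
  rw [Finset.sum_comm]
  calc ∑ v, ∑ u, B u v ^ 2 ≤ ∑ _v : P, opNorm B ^ 2 :=
        sum_le_sum fun v _ => (l2OpNormLE_opNorm B).sum_sq_le v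
    _ = opNorm B ^ 2 * Fintype.card P := by simp [mul_comm]

theorem sum_prod_mul_mul_le {n : ℕ} {α : Fin n → Type*} [∀ i, Fintype (α i)]
    {F : ∀ i, α i × α i → α i × α i → ℝ} {c : Fin n → ℝ} (hF : ∀ i, L2OpNormLE (F i) (c i))
    (B : (∀ i, α i) → (∀ i, α i) → ℝ) :
    ∑ u, ∑ v, ∑ u', ∑ v', (∏ i, F i (u i, v i) (u' i, v' i)) * B u v * B u' v'
      ≤ (∏ i, c i) * ∑ u, ∑ v, B u v ^ 2 := by
  set e := Equiv.arrowProdEquivProdArrow (Fin n) α α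
  have h := (L2OpNormLE.pi hF).sum_sum_mul_mul_le fun y => B (e y).1 (e y).2
  have hpair : ∀ f : (∀ i, α i × α i) → ℝ, ∑ y, f y = ∑ u, ∑ v, f (e.symm (u, v)) := fun f => by
    rw [← e.symm.sum_comp, Fintype.sum_prod_type]
  simp only [hpair] at h
  exact h

section PairKernel

variable {n : Type*}

/-- For `j = 0, 1, 2`, `pairKernel S K j (u, v) (u', v')` is `II`, `III`, `IV` at `uvu'v'`. -/
def pairKernel (S : Matrix n n ℝ) (K : n → n → n → n → ℝ) : Fin 3 → n × n → n × n → ℝ :=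
  ![fun p q => S p.1 q.1 * S p.2 q.2, fun p q => S p.1 q.2 * S q.1 p.2,
    fun p q => K p.1 p.2 q.1 q.2]

theorem sum_pairKernel (S : Matrix n n ℝ) (K : n → n → n → n → ℝ) (u v u' v' : n) :
    ∑ j, pairKernel S K j (u, v) (u', v') = S u u' * S v v' + S u v' * S u' v + K u v u' v' := by
  simp [pairKernel, Fin.sum_univ_three, add_assoc]

theorem pairKernel_l2OpNormLE [Fintype n] {S : Matrix n n ℝ} {K : n → n → n → n → ℝ} {C κ : ℝ}
    (hS : L2OpNormLE S C) (hsymm : S.IsSymm) (hκ : 0 ≤ κ)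
    (hKsymm : ∀ u v u' v', K u v u' v' = K u' v' u v) (hK : ∀ u v, ∑ u', ∑ v', |K u v u' v'| ≤ κ)
    (j : Fin 3) : L2OpNormLE (pairKernel S K j) (if j = 2 then κ else C ^ 2) := by
  fin_cases j
  · simpa [pairKernel, sq] using hS.kron hS
  · have hswap := (hS.kron hS).reindex (Equiv.refl _) (Equiv.prodComm n n)
    simp only [pairKernel, sq]
    convert hswap using 3 with p q
    · simp [hsymm.apply q.1 p.2]
    · rfl
  · exact l2OpNormLE_of_sum_abs_le hκ (fun p q => hKsymm ..)
      fun p => (Fintype.sum_prod_type _).trans_le (hK p.1 p.2)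

end PairKernel

theorem prod_natCast_le_prod_mul_prod {ι : Type*} [Fintype ι] (d : ι → ℕ) (s : Finset ι) :
    ∏ i, (d i : ℝ) ≤ (∏ i, (d i : ℝ)) * ∏ i ∈ s, (d i : ℝ) := by
  by_cases hzero : ∃ i, d i = 0
  · obtain ⟨i, hi⟩ := hzero
    have hN : ∏ i, (d i : ℝ) = 0 := prod_eq_zero (mem_univ i) (by simp [hi])
    simp [hN]
  · push Not at hzero
    refine le_mul_of_one_le_right (prod_nonneg fun i _ => by positivity) ?_
    exact_mod_cast Nat.one_le_iff_ne_zero.mpr (prod_ne_zero_iff.mpr fun i _ => hzero i)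

theorem natCast_le_rpow_three_halves (m : ℕ) : (m : ℝ) ≤ (m : ℝ) ^ ((3 : ℝ) / 2) := by
  rcases m.eq_zero_or_pos with rfl | hm
  · simp
  · exact Real.self_le_rpow_of_one_le (by exact_mod_cast hm) (by norm_num)

theorem pow_mul_pow_mul_le_ciSup {k : ℕ} (d : Fin k → ℕ) {C κ X : ℝ} (hκ : 0 < κ) (hX : 0 ≤ X)
    (s : Finset (Fin k)) {l : ℕ} (hl : 0 < l) (hsl : s.card + l = k) :
    (C ^ 2) ^ s.card * κ ^ l * (X * ∏ i, (d i : ℝ))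
      ≤ κ ^ k * X * ⨆ s : {s : Finset (Fin k) // s.card ≤ k - 1},
          (C ^ 2 / κ) ^ s.1.card * (∏ i, (d i : ℝ)) * ∏ i ∈ s.1, (d i : ℝ) := by
  have hbdd : BddAbove (Set.range fun s : {s : Finset (Fin k) // s.card ≤ k - 1} =>
      (C ^ 2 / κ) ^ s.1.card * (∏ i, (d i : ℝ)) * ∏ i ∈ s.1, (d i : ℝ)) :=
    (Set.finite_range _).bddAbove
  calc (C ^ 2) ^ s.card * κ ^ l * (X * ∏ i, (d i : ℝ))
      = κ ^ k * X * ((C ^ 2 / κ) ^ s.card * ∏ i, (d i : ℝ)) := by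
        rw [show κ ^ k = κ ^ s.card * κ ^ l by rw [← pow_add, hsl], div_pow]
        field_simp
    _ ≤ κ ^ k * X * ((C ^ 2 / κ) ^ s.card * (∏ i, (d i : ℝ)) * ∏ i ∈ s, (d i : ℝ)) := by
        rw [mul_assoc _ (∏ i, (d i : ℝ))]
        gcongr
        exact prod_natCast_le_prod_mul_prod d s
    _ ≤ _ := by
        gcongr
        exact le_ciSup hbdd ⟨s, by omega⟩

theorem card_filter_forall_ne (k : ℕ) :
    (univ.filter fun a : Fin k → Fin 3 => ∀ i, a i ≠ 2).card = 2 ^ k := by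
  have hpi : (univ.filter fun a : Fin k → Fin 3 => ∀ i, a i ≠ 2) =
      Fintype.piFinset fun _ => ({2}ᶜ : Finset (Fin 3)) := by
    ext a; simp
  rw [hpi, Fintype.card_piFinset, prod_const, card_univ, Fintype.card_fin]
  rfl

theorem sum_prod_ite_mul_le {k : ℕ} (d : Fin k → ℕ) {C κ X : ℝ} (hκ : 0 < κ) (hX : 0 ≤ X) :
    ∑ a : Fin k → Fin 3, (∏ i, if a i = 2 then κ else C ^ 2) * (X * ∏ i, (d i : ℝ))
      ≤ 2 ^ k * C ^ (2 * k) * X * (∏ i, (d i : ℝ)) ^ ((3 : ℝ) / 2)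
        + (3 ^ k - 2 ^ k) * κ ^ k * X * ⨆ s : {s : Finset (Fin k) // s.card ≤ k - 1},
          (C ^ 2 / κ) ^ s.1.card * (∏ i, (d i : ℝ)) * ∏ i ∈ s.1, (d i : ℝ) := by
  set SUP := ⨆ s : {s : Finset (Fin k) // s.card ≤ k - 1},
    (C ^ 2 / κ) ^ s.1.card * (∏ i, (d i : ℝ)) * ∏ i ∈ s.1, (d i : ℝ)
  have hmixed_card : ((univ.filter fun a : Fin k → Fin 3 => ¬∀ i, a i ≠ 2).card : ℝ)
      = 3 ^ k - 2 ^ k := by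
    have hsplit : (univ.filter fun a : Fin k → Fin 3 => ¬∀ i, a i ≠ 2).card + 2 ^ k = 3 ^ k := by
      rw [← card_filter_forall_ne, add_comm, card_filter_add_card_filter_not]
      simp
    rw [eq_sub_iff_add_eq]
    exact_mod_cast hsplit
  have hpure : ∀ a ∈ univ.filter fun a : Fin k → Fin 3 => ∀ i, a i ≠ 2,
      (∏ i, if a i = 2 then κ else C ^ 2) * (X * ∏ i, (d i : ℝ))
        ≤ C ^ (2 * k) * X * (∏ i, (d i : ℝ)) ^ ((3 : ℝ) / 2) := by
    intro a ha
    have hC : (∏ i, if a i = 2 then κ else C ^ 2) = (C ^ 2) ^ k := by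
      simp [prod_congr rfl fun i _ => if_neg ((mem_filter.mp ha).2 i)]
    have hN := natCast_le_rpow_three_halves (∏ i, d i)
    push_cast at hN
    rw [hC, pow_mul, mul_assoc]
    gcongr
  have hmixed : ∀ a ∈ univ.filter fun a : Fin k → Fin 3 => ¬∀ i, a i ≠ 2,
      (∏ i, if a i = 2 then κ else C ^ 2) * (X * ∏ i, (d i : ℝ)) ≤ κ ^ k * X * SUP := by
    intro a ha
    obtain ⟨i, hi⟩ : ∃ i, a i = 2 := by simpa using (mem_filter.mp ha).2
    rw [prod_ite, prod_const, prod_const, mul_comm (κ ^ _)]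
    refine pow_mul_pow_mul_le_ciSup d hκ hX _ (card_pos.mpr ⟨i, by simp [hi]⟩) ?_
    rw [add_comm, card_filter_add_card_filter_not, card_univ, Fintype.card_fin]
  rw [← sum_filter_add_sum_filter_not univ (fun a : Fin k → Fin 3 => ∀ i, a i ≠ 2)]
  gcongr ?_ + ?_
  · refine (sum_le_card_nsmul _ _ _ hpure).trans_eq ?_
    rw [card_filter_forall_ne, nsmul_eq_mul]; push_cast; ring
  · refine (sum_le_card_nsmul _ _ _ hmixed).trans_eq ?_
    rw [nsmul_eq_mul, hmixed_card]; ring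

theorem stmt_12_general (k : ℕ) (d : Fin k → ℕ) (C κ₄ : ℝ) (hκ₄ : 0 < κ₄)
    (S : ∀ i : Fin k, Matrix (Fin (d i)) (Fin (d i)) ℝ)
    (hsym : ∀ i, (S i).IsSymm) (hC : ∀ i, opNorm (S i) ≤ C)
    (K : ∀ i : Fin k, Fin (d i) → Fin (d i) → Fin (d i) → Fin (d i) → ℝ)
    (hKsym : ∀ i, ∀ u v u' v', K i u v u' v' = K i u' v' u v)
    (hK : ∀ i, ∀ u v, (∑ u', ∑ v', |K i u v u' v'|) ≤ κ₄)
    (B : Matrix (∀ i, Fin (d i)) (∀ i, Fin (d i)) ℝ) :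
    (∑ u, ∑ v, ∑ u', ∑ v',
        (∏ i : Fin k,
          (S i (u i) (u' i) * S i (v i) (v' i) + S i (u i) (v' i) * S i (u' i) (v i)
            + K i (u i) (v i) (u' i) (v' i))) * B u v * B u' v')
      ≤ 2 ^ k * C ^ (2 * k) * opNorm B ^ 2 * (∏ i, (d i : ℝ)) ^ ((3 : ℝ) / 2)
        + (3 ^ k - 2 ^ k) * κ₄ ^ k * opNorm B ^ 2 *
          (⨆ s : {s : Finset (Fin k) // s.card ≤ k - 1},
            (C ^ 2 / κ₄) ^ (s.1.card) * (∏ i, (d i : ℝ)) * ∏ i ∈ s.1, (d i : ℝ)) := by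
  have hsite : ∀ i j, L2OpNormLE (pairKernel (S i) (K i) j) (if j = 2 then κ₄ else C ^ 2) :=
    fun i => pairKernel_l2OpNormLE ((l2OpNormLE_opNorm (S i)).mono (hC i)) (hsym i) hκ₄.le
      (hKsym i) (hK i)
  simp only [← sum_pairKernel, Fintype.prod_sum, Finset.sum_mul]
  simp only [sum_comm (t := (univ : Finset (Fin k → Fin 3)))]
  calc _ ≤ ∑ a : Fin k → Fin 3, (∏ i, if a i = 2 then κ₄ else C ^ 2) * ∑ u, ∑ v, B u v ^ 2 :=
        sum_le_sum fun a _ => sum_prod_mul_mul_le (fun i => hsite i (a i)) B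
    _ ≤ ∑ a : Fin k → Fin 3,
          (∏ i, if a i = 2 then κ₄ else C ^ 2) * (opNorm B ^ 2 * ∏ i, (d i : ℝ)) := by
        gcongr
        simpa using sum_sum_sq_le_opNorm_sq_mul_card B
    _ ≤ _ := sum_prod_ite_mul_le d hκ₄ (sq_nonneg _)

/-- with `II⁽ⁱ⁾_{uvu'v'} = σ⁽ⁱ⁾_{uu'}σ⁽ⁱ⁾_{vv'}`,
`III⁽ⁱ⁾_{uvu'v'} = σ⁽ⁱ⁾_{uv'}σ⁽ⁱ⁾_{u'v}` and `IV⁽ⁱ⁾ = K⁽ⁱ⁾` a symmetric kernel whose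
rows have ℓ¹ norm at most `κ₄`,
`Σ_{u,v,u',v'} (∏ᵢ (II⁽ⁱ⁾+III⁽ⁱ⁾+IV⁽ⁱ⁾)) b_{uv}b_{u'v'}
  ≤ 2^k C^{2k} ‖B‖² (∏ᵢdᵢ)^{3/2}
    + (3^k−2^k) κ₄^k ‖B‖² max_{0≤ℓ≤k−1} max_{i₁<⋯<i_ℓ} (C²/κ₄)^ℓ (∏ᵢdᵢ) ∏ⱼ d_{iⱼ}`,
where the inner maximum is over subsets `s ⊆ {1,…,k}` of cardinality at most `k−1`. -/
theorem stmt_12 (k : ℕ) (hk : 1 ≤ k) (d : Fin k → ℕ) (C κ₄ : ℝ) (hκ₄ : 0 < κ₄)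
    (S : ∀ i : Fin k, Matrix (Fin (d i)) (Fin (d i)) ℝ)
    (hsym : ∀ i, (S i).IsSymm) (hC : ∀ i, opNorm (S i) ≤ C)
    (K : ∀ i : Fin k, Fin (d i) → Fin (d i) → Fin (d i) → Fin (d i) → ℝ)
    (hKsym : ∀ i, ∀ u v u' v', K i u v u' v' = K i u' v' u v)
    (hK : ∀ i, ∀ u v, (∑ u', ∑ v', |K i u v u' v'|) ≤ κ₄)
    (B : Matrix (∀ i, Fin (d i)) (∀ i, Fin (d i)) ℝ) :
    (∑ u, ∑ v, ∑ u', ∑ v',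
        (∏ i : Fin k,
          (S i (u i) (u' i) * S i (v i) (v' i) + S i (u i) (v' i) * S i (u' i) (v i)
            + K i (u i) (v i) (u' i) (v' i))) * B u v * B u' v')
      ≤ 2 ^ k * C ^ (2 * k) * opNorm B ^ 2 * (∏ i, (d i : ℝ)) ^ ((3 : ℝ) / 2)
        + (3 ^ k - 2 ^ k) * κ₄ ^ k * opNorm B ^ 2 *
          (⨆ s : {s : Finset (Fin k) // s.card ≤ k - 1},
            (C ^ 2 / κ₄) ^ (s.1.card) * (∏ i, (d i : ℝ)) * ∏ i ∈ s.1, (d i : ℝ)) :=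
  stmt_12_general k d C κ₄ hκ₄ S hsym hC K hKsym hK B
end
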